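/- arXiv:2006.07423 — 5 statements merged into one kernel-verified Lean document; each statement's English description precedes it below -/
import Mathlib

section
/- Let V be a discrete valuation ring with maximal ideal 𝔪 and finite residue field of cardinality q, with uniformizer π, and let R = {u_0,...,u_{q−1}} ⊆ V with u_0 = 0 be a complete set of representatives of V modulo 𝔪. For n ≥ 0 with base-q expansion n = Σ n_i q^i define u_n = Σ u_{n_i} π^i. Then for any m < n, the valuation v(u_n − u_m) equals the index of the least base-q digit in which m and n differ; in particular u_n − u_m ≠ 0, so the u_n are pairwise distinct. -/
lemma ofDigits_eq_sum (q : ℕ) (L : List ℕ) :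
    Nat.ofDigits q L = ∑ i ∈ Finset.range L.length, L.getD i 0 * q ^ i := by
  induction L with
  | nil => simp
  | cons d L ih =>
    rw [Nat.ofDigits_cons, ih, List.length_cons, Finset.sum_range_succ', Finset.mul_sum]
    simp only [List.getD_cons_succ, List.getD_cons_zero, pow_zero, mul_one]
    rw [add_comm]
    congr 1
    exact Finset.sum_congr rfl fun i _ => by ring

/-- In a DVR `V` with maximal ideal `(π)`, finite residue field of cardinality `q`,
representatives `u 0, ..., u (q-1)` (with `u 0 = 0`) of the residue classes, and `u n`
defined digit-wise from the base-`q` expansion of `n`, for any `m < n` the valuation of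
`u n - u m` equals the index of the least base-`q` digit in which `m` and `n` differ;
in particular `u n - u m ≠ 0`, so the `u n` are pairwise distinct. -/
theorem valuation_of_u_sub
    (V : Type*) [CommRing V] [IsDomain V] [IsDiscreteValuationRing V]
    (q : ℕ) (hq : 2 ≤ q)
    (π : V) (hπ : Irreducible π)
    (hmax : IsLocalRing.maximalIdeal V = Ideal.span {π})
    (u : ℕ → V) (hu0 : u 0 = 0)
    (hurep : ∀ a : V, ∃! i : ℕ, i < q ∧ a - u i ∈ IsLocalRing.maximalIdeal V)
    (hudig : ∀ n : ℕ, u n = ∑ i ∈ Finset.range (Nat.digits q n).length,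
        u ((Nat.digits q n).getD i 0) * π ^ i)
    :
    (∀ m n j : ℕ, m < n →
        (∀ i < j, (Nat.digits q m).getD i 0 = (Nat.digits q n).getD i 0) →
        (Nat.digits q m).getD j 0 ≠ (Nat.digits q n).getD j 0 →
        IsDiscreteValuationRing.addVal V (u n - u m) = (j : ℕ∞) ∧ u n - u m ≠ 0) ∧
    (∀ m n : ℕ, m ≠ n → u m ≠ u n) := by
  -- digits are < q
  have hdig_lt : ∀ k i : ℕ, (Nat.digits q k).getD i 0 < q := by
    intro k i
    rcases lt_or_ge i (Nat.digits q k).length with h | h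
    · rw [List.getD_eq_getElem _ _ h]
      exact Nat.digits_lt_base hq (List.getElem_mem h)
    · rw [List.getD_eq_default _ _ h]
      omega
  -- distinct representatives differ by a unit
  have hrepne : ∀ a b : ℕ, a < q → b < q →
      u a - u b ∈ IsLocalRing.maximalIdeal V → a = b := by
    intro a b ha hb h
    exact ((hurep (u a)).unique ⟨ha, by simp⟩ ⟨hb, h⟩)
  -- extended digit sum
  have husum : ∀ k M : ℕ, (Nat.digits q k).length ≤ M →
      u k = ∑ i ∈ Finset.range M, u ((Nat.digits q k).getD i 0) * π ^ i := by
    intro k M h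
    rw [hudig k]
    apply Finset.sum_subset (Finset.range_subset_range.2 h)
    intro x _ hx
    rw [Finset.mem_range, not_lt] at hx
    rw [List.getD_eq_default _ _ hx, hu0, zero_mul]
  have hπmem : π ∈ IsLocalRing.maximalIdeal V := by
    rw [hmax]; exact Ideal.mem_span_singleton_self π
  -- main valuation computation (no order hypothesis needed)
  have main : ∀ m n j : ℕ,
      (∀ i < j, (Nat.digits q m).getD i 0 = (Nat.digits q n).getD i 0) →
      (Nat.digits q m).getD j 0 ≠ (Nat.digits q n).getD j 0 →
      IsDiscreteValuationRing.addVal V (u n - u m) = (j : ℕ∞) ∧ u n - u m ≠ 0 := by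
    intro m n j heq hne
    set dm : ℕ → ℕ := fun i => (Nat.digits q m).getD i 0 with hdm
    set dn : ℕ → ℕ := fun i => (Nat.digits q n).getD i 0 with hdn
    set M : ℕ := max (Nat.digits q m).length (Nat.digits q n).length with hM
    set c : ℕ → V := fun i => u (dn i) - u (dm i) with hc
    have hjM : j < M := by
      by_contra h
      rw [not_lt] at h
      apply hne
      show dm j = dn j
      rw [hdm, hdn]
      simp only []
      rw [List.getD_eq_default _ _ (le_trans (le_max_left _ _) h),
        List.getD_eq_default _ _ (le_trans (le_max_right _ _) h)]
    have hsub : u n - u m = ∑ i ∈ Finset.range M, c i * π ^ i := by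
      rw [husum n M (le_max_right _ _), husum m M (le_max_left _ _),
        ← Finset.sum_sub_distrib]
      exact Finset.sum_congr rfl fun i _ => by rw [hc]; ring
    have hc0 : ∀ i < j, c i = 0 := by
      intro i hi
      show u (dn i) - u (dm i) = 0
      simp only [hdm, hdn]
      rw [heq i hi, sub_self]
    have hcj : c j ∉ IsLocalRing.maximalIdeal V := by
      intro h
      exact hne ((hrepne _ _ (hdig_lt n j) (hdig_lt m j) h).symm)
    -- drop the first j (zero) terms
    have hsub2 : u n - u m = ∑ i ∈ Finset.Ico j M, c i * π ^ i := by
      rw [hsub]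
      refine (Finset.sum_subset ?_ ?_).symm
      · intro x hx
        rw [Finset.mem_Ico] at hx
        exact Finset.mem_range.2 hx.2
      · intro x hx hx'
        rw [Finset.mem_range] at hx
        rw [Finset.mem_Ico, not_and] at hx'
        rcases lt_or_ge x j with h | h
        · rw [hc0 x h, zero_mul]
        · exact absurd hx (hx' h)
    rw [Finset.sum_Ico_eq_sum_range] at hsub2
    have hfac : u n - u m = π ^ j * ∑ i ∈ Finset.range (M - j), c (j + i) * π ^ i := by
      rw [hsub2, Finset.mul_sum]
      exact Finset.sum_congr rfl fun i _ => by rw [pow_add]; ring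
    set S : V := ∑ i ∈ Finset.range (M - j), c (j + i) * π ^ i with hS
    have hMj : M - j = (M - j - 1) + 1 := by omega
    have hSsplit : S = π * (∑ i ∈ Finset.range (M - j - 1), c (j + 1 + i) * π ^ i) + c j := by
      rw [hS, hMj, Finset.sum_range_succ', Finset.mul_sum]
      congr 1
      · refine Finset.sum_congr rfl fun i _ => ?_
        have h1 : j + (i + 1) = j + 1 + i := by omega
        rw [h1, pow_succ]
        ring
      · simp
    have hSunit : IsUnit S := by
      by_contra h
      apply hcj
      have hS' : S ∈ IsLocalRing.maximalIdeal V :=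
        (IsLocalRing.mem_maximalIdeal S).2 h
      have : c j = S - π * (∑ i ∈ Finset.range (M - j - 1), c (j + 1 + i) * π ^ i) := by
        rw [hSsplit]; ring
      rw [this]
      exact Ideal.sub_mem _ hS' (Ideal.mul_mem_right _ _ hπmem)
    obtain ⟨w, hw⟩ := hSunit
    have hval : IsDiscreteValuationRing.addVal V (u n - u m) = (j : ℕ∞) := by
      rw [hfac, ← hw, mul_comm]
      exact IsDiscreteValuationRing.addVal_def' w hπ j
    refine ⟨hval, ?_⟩
    intro h0
    rw [h0, IsDiscreteValuationRing.addVal_zero] at hval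
    exact (ENat.top_ne_coe j) hval
  constructor
  · exact fun m n j _ => main m n j
  · -- injectivity
    have digeq : ∀ a b : ℕ,
        (∀ i, (Nat.digits q a).getD i 0 = (Nat.digits q b).getD i 0) → a = b := by
      intro a b h
      set M : ℕ := max (Nat.digits q a).length (Nat.digits q b).length with hM
      have ext : ∀ k : ℕ, (Nat.digits q k).length ≤ M →
          k = ∑ i ∈ Finset.range M, (Nat.digits q k).getD i 0 * q ^ i := by
        intro k hk
        conv_lhs => rw [← Nat.ofDigits_digits q k]
        rw [ofDigits_eq_sum]
        apply Finset.sum_subset (Finset.range_subset_range.2 hk)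
        intro x _ hx
        rw [Finset.mem_range, not_lt] at hx
        rw [List.getD_eq_default _ _ hx, zero_mul]
      rw [ext a (le_max_left _ _), ext b (le_max_right _ _)]
      exact Finset.sum_congr rfl fun i _ => by rw [h i]
    intro m n hmn hum
    have hex : ∃ j, (Nat.digits q m).getD j 0 ≠ (Nat.digits q n).getD j 0 := by
      by_contra h
      push_neg at h
      exact hmn (digeq m n h)
    set j := Nat.find hex with hj
    have h1 := Nat.find_spec hex
    have h2 : ∀ i < j, (Nat.digits q m).getD i 0 = (Nat.digits q n).getD i 0 := by
      intro i hi
      by_contra h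
      have h3 : j ≤ i := Nat.find_le h
      omega
    exact (main m n j h2 h1).2 (by rw [hum, sub_self])
end

section
/- Let V be a DVR with maximal ideal 𝔪 and finite residue field of cardinality q, with digit sequence (u_n) and polynomials (F_n) as above. Let x ∈ V have π-adic expansion x = Σ_j x_j π^j with x_j ∈ R, and let n have base-q expansion n = Σ_i n_i q^i. Then F_n(x) ≡ Π_i F_{n_i}(x_i) (mod 𝔪). (Analogue of Lucas' theorem.) -/
private lemma lucas_prod_range_mul {M : Type*} [CommMonoid M] (q m : ℕ) (f : ℕ → M) :
    ∏ k ∈ Finset.range (q * m), f k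
      = ∏ k' ∈ Finset.range m, ∏ s ∈ Finset.range q, f (q * k' + s) := by
  induction m with
  | zero => simp
  | succ m ih => rw [Nat.mul_succ, Finset.prod_range_add, ih, Finset.prod_range_succ]

/-- Analogue of Lucas' theorem (Boulanger–Chabert): if `x ∈ V` has π-adic expansion
`x = Σ_j u (c j) * π ^ j` (meaning `x ≡ Σ_{j<N} u (c j) * π ^ j mod 𝔪 ^ N` for every
`N`), and `n` has base-`q` digits `n_i`, then
`F n x ≡ ∏ i, F (n_i) (u (c i)) (mod 𝔪)` (the product over the digits of `n`, the
remaining factors being `F 0 = 1`). -/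
theorem lucas_analogue
    (V : Type*) [CommRing V] [IsDomain V] [IsDiscreteValuationRing V]
    (q : ℕ) (hq : 2 ≤ q)
    (π : V) (hπ : Irreducible π)
    (hmax : IsLocalRing.maximalIdeal V = Ideal.span {π})
    (u : ℕ → V) (hu0 : u 0 = 0)
    (hurep : ∀ a : V, ∃! i : ℕ, i < q ∧ a - u i ∈ IsLocalRing.maximalIdeal V)
    (hudig : ∀ n : ℕ, u n = ∑ i ∈ Finset.range (Nat.digits q n).length,
        u ((Nat.digits q n).getD i 0) * π ^ i)
    (F : ℕ → V → V) (hF0 : ∀ x : V, F 0 x = 1)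
    (hF : ∀ (n : ℕ) (x : V),
        (∏ k ∈ Finset.range n, (u n - u k)) * F n x = ∏ k ∈ Finset.range n, (x - u k))
    (x : V) (c : ℕ → ℕ) (hc : ∀ j : ℕ, c j < q)
    (hx : ∀ N : ℕ, x - ∑ j ∈ Finset.range N, u (c j) * π ^ j ∈
        (IsLocalRing.maximalIdeal V) ^ N)
    (n : ℕ) :
    F n x - ∏ i ∈ Finset.range (Nat.digits q n).length,
        F ((Nat.digits q n).getD i 0) (u (c i)) ∈ IsLocalRing.maximalIdeal V := by
  classical
  have hπI : π ∈ IsLocalRing.maximalIdeal V := by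
    rw [hmax]; exact Ideal.mem_span_singleton_self π
  have hπ0 : π ≠ 0 := hπ.ne_zero
  -- distinct digit representatives have distinct residues
  have L1 : ∀ i j : ℕ, i < q → j < q → u i - u j ∈ IsLocalRing.maximalIdeal V → i = j := by
    intro i j hi hj hij
    obtain ⟨k, -, hk⟩ := hurep (u i)
    have h1 : i = k := hk i ⟨hi, by simp⟩
    have h2 : j = k := hk j ⟨hj, hij⟩
    rw [h1, h2]
  -- recursion for the digit representatives
  have L2 : ∀ m r : ℕ, r < q → u (q * m + r) = u r + π * u m := by
    intro m r hr
    rcases Nat.eq_zero_or_pos (q * m + r) with h0 | hpos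
    · have hm : m = 0 := by
        rcases Nat.add_eq_zero.mp h0 with ⟨h1, -⟩
        exact (Nat.mul_eq_zero.mp h1).resolve_left (by omega)
      have hr0 : r = 0 := by omega
      simp [hm, hr0, hu0]
    · have hd : Nat.digits q (q * m + r) = r :: Nat.digits q m := by
        rw [Nat.digits_def' (by omega : 1 < q) hpos]
        congr 1
        · rw [Nat.mul_add_mod, Nat.mod_eq_of_lt hr]
        · congr 1
          rw [Nat.mul_add_div (by omega), Nat.div_eq_of_lt hr, Nat.add_zero]
      rw [hudig (q * m + r), hd]
      simp only [List.length_cons]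
      rw [Finset.sum_range_succ']
      simp only [List.getD_cons_succ, List.getD_cons_zero, pow_zero, mul_one, pow_succ,
        ← mul_assoc]
      rw [← Finset.sum_mul, ← hudig m]
      ring
  -- injectivity of u
  have L3 : ∀ a b : ℕ, u a = u b → a = b := by
    have key : ∀ N a b : ℕ, a + b ≤ N → u a = u b → a = b := by
      intro N
      induction N with
      | zero => intro a b h _; omega
      | succ N ih =>
        intro a b hab h
        rcases Nat.eq_zero_or_pos (a + b) with h0 | hpos
        · omega
        · have ha := Nat.div_add_mod a q
          have hb := Nat.div_add_mod b q
          have hma : a % q < q := Nat.mod_lt _ (by omega)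
          have hmb : b % q < q := Nat.mod_lt _ (by omega)
          have hua : u a = u (a % q) + π * u (a / q) := by
            conv_lhs => rw [← ha]; exact L2 _ _ hma
          have hub : u b = u (b % q) + π * u (b / q) := by
            conv_lhs => rw [← hb]; exact L2 _ _ hmb
          have hmem : u (a % q) - u (b % q) ∈ IsLocalRing.maximalIdeal V := by
            have hlin : u (a % q) - u (b % q) = π * (u (b / q) - u (a / q)) := by
              rw [hua, hub] at h; linear_combination h
            rw [hlin]
            exact Ideal.mul_mem_right _ _ hπI
          have hseq : a % q = b % q := L1 _ _ hma hmb hmem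
          have hdiv : u (a / q) = u (b / q) := by
            apply mul_left_cancel₀ hπ0
            rw [hua, hub, hseq] at h
            linear_combination h
          have f1 : a / q ≤ a := Nat.div_le_self _ _
          have f2 : b / q ≤ b := Nat.div_le_self _ _
          have f3 : 0 < a → a / q < a := fun h' => Nat.div_lt_self h' (by omega)
          have f4 : 0 < b → b / q < b := fun h' => Nat.div_lt_self h' (by omega)
          have hde : a / q = b / q := ih _ _ (by omega) hdiv
          rw [← ha, ← hb, hde, hseq]
    exact fun a b h => key (a + b) a b le_rfl h
  -- the "denominators" are nonzero
  have hDen : ∀ m : ℕ, (∏ k ∈ Finset.range m, (u m - u k)) ≠ 0 := by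
    intro m
    rw [Finset.prod_ne_zero_iff]
    intro k hk
    have hkm := Finset.mem_range.mp hk
    exact sub_ne_zero.mpr fun h => absurd (L3 _ _ h) (by omega)
  set φ := IsLocalRing.residue V with hφdef
  have heq : ∀ a b : V, φ a = φ b ↔ a - b ∈ IsLocalRing.maximalIdeal V := fun a b =>
    Ideal.Quotient.eq
  have hφπ : φ π = 0 := Ideal.Quotient.eq_zero_iff_mem.mpr hπI
  have Lsurj : ∀ w : IsLocalRing.ResidueField V, ∃ s : ℕ, s < q ∧ φ (u s) = w := by
    intro w
    obtain ⟨v, rfl⟩ := Ideal.Quotient.mk_surjective w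
    obtain ⟨s, ⟨hs, hmem⟩, -⟩ := hurep v
    exact ⟨s, hs, ((heq _ _).mpr (by
      simpa using (IsLocalRing.maximalIdeal V).neg_mem hmem)).symm ▸ rfl⟩
  -- Wilson-type independence of the residue products
  have L4 : ∀ a : ℕ, a < q →
      ∏ s ∈ (Finset.range q).erase a, (φ (u a) - φ (u s))
        = ∏ w ∈ ((Finset.range q).image (fun s => φ (u s))).erase 0, w := by
    intro a ha
    have hinj : ∀ s ∈ (Finset.range q).erase a, ∀ t ∈ (Finset.range q).erase a,
        φ (u a) - φ (u s) = φ (u a) - φ (u t) → s = t := by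
      intro s hs t ht hst
      have h1 : φ (u s) = φ (u t) := by linear_combination -hst
      exact L1 s t (Finset.mem_range.mp (Finset.mem_of_mem_erase hs))
        (Finset.mem_range.mp (Finset.mem_of_mem_erase ht)) ((heq _ _).mp h1)
    rw [← Finset.prod_image (g := fun s => φ (u a) - φ (u s)) (f := fun w => w) hinj]
    congr 1
    ext w
    simp only [Finset.mem_image, Finset.mem_erase, Finset.mem_range]
    constructor
    · rintro ⟨s, ⟨hsa, hs⟩, rfl⟩
      refine ⟨sub_ne_zero.mpr (fun h => hsa ((L1 s a hs ha ((heq _ _).mp h.symm)).symm ▸ rfl)), ?_⟩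
      obtain ⟨t, ht, hφt⟩ := Lsurj (φ (u a) - φ (u s))
      exact ⟨t, ht, hφt⟩
    · rintro ⟨hw0, t, ht, rfl⟩
      obtain ⟨s, hs, hφs⟩ := Lsurj (φ (u a) - φ (u t))
      refine ⟨s, ⟨?_, hs⟩, by rw [hφs]; ring⟩
      rintro rfl
      apply hw0
      have h2 : φ (u t) = 0 := by linear_combination hφs
      exact h2
  -- main induction
  induction n using Nat.strong_induction_on generalizing x c with
  | _ n ih =>
  rcases Nat.eq_zero_or_pos n with rfl | hpos
  · simp only [Nat.digits_zero, List.length_nil, Finset.range_zero, Finset.prod_empty,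
      hF0, sub_self]
    exact Ideal.zero_mem _
  · set m := n / q with hmdef
    set r := n % q with hrdef
    have hrq : r < q := Nat.mod_lt _ (by omega)
    have hn : q * m + r = n := Nat.div_add_mod n q
    have hmn : m < n := Nat.div_lt_self hpos (by omega)
    have hdig : Nat.digits q n = r :: Nat.digits q m := Nat.digits_def' (by omega) hpos
    obtain ⟨y, hy⟩ : ∃ y : V, y * π = x - u (c 0) := by
      have h1 := hx 1
      rw [pow_one] at h1
      simp only [Finset.range_one, Finset.sum_singleton, pow_zero, mul_one] at h1
      rw [hmax] at h1
      exact Ideal.mem_span_singleton'.mp h1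
    have hxy : x = u (c 0) + π * y := by linear_combination -hy
    have hx' : ∀ N : ℕ, y - ∑ j ∈ Finset.range N, u (c (j + 1)) * π ^ j ∈
        IsLocalRing.maximalIdeal V ^ N := by
      intro N
      have h2 := hx (N + 1)
      rw [Finset.sum_range_succ'] at h2
      have hsum : ∑ j ∈ Finset.range N, u (c (j + 1)) * π ^ (j + 1)
          = π * ∑ j ∈ Finset.range N, u (c (j + 1)) * π ^ j := by
        rw [Finset.mul_sum]
        exact Finset.sum_congr rfl fun j _ => by ring
      have h3 : x - ((∑ j ∈ Finset.range N, u (c (j + 1)) * π ^ (j + 1)) + u (c 0) * π ^ 0)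
          = π * (y - ∑ j ∈ Finset.range N, u (c (j + 1)) * π ^ j) := by
        rw [hsum, hxy]; ring
      rw [h3] at h2
      rw [hmax, Ideal.span_singleton_pow] at h2 ⊢
      obtain ⟨w, hw⟩ := Ideal.mem_span_singleton'.mp h2
      refine Ideal.mem_span_singleton'.mpr ⟨w, ?_⟩
      apply mul_left_cancel₀ hπ0
      rw [← hw]
      ring
    have IHm := ih m hmn y (fun i => c (i + 1)) (fun j => hc (j + 1)) hx'
    have hterm : ∀ k' s : ℕ, s < q →
        x - u (q * k' + s) = u (c 0) - u s + π * (y - u k') := by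
      intro k' s hs; rw [L2 k' s hs, hxy]; ring
    have hterm' : ∀ k' s : ℕ, s < q →
        u (q * m + r) - u (q * k' + s) = u r - u s + π * (u m - u k') := by
      intro k' s hs; rw [L2 k' s hs, L2 m r hrq]; ring
    have Enum : (∏ k ∈ Finset.range n, (x - u k))
        = π ^ m * (∏ k' ∈ Finset.range m, (y - u k'))
          * (∏ k' ∈ Finset.range m, ∏ s ∈ (Finset.range q).erase (c 0),
              (u (c 0) - u s + π * (y - u k')))
          * (∏ s ∈ Finset.range r, (u (c 0) - u s + π * (y - u m))) := by
      conv_lhs => rw [← hn]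
      rw [Finset.prod_range_add, lucas_prod_range_mul]
      have e1 : ∀ k' ∈ Finset.range m,
          (∏ s ∈ Finset.range q, (x - u (q * k' + s)))
            = (π * (y - u k')) * ∏ s ∈ (Finset.range q).erase (c 0),
                (u (c 0) - u s + π * (y - u k')) := by
        intro k' _
        rw [Finset.prod_congr rfl (fun s hs => hterm k' s (Finset.mem_range.mp hs)),
          ← Finset.mul_prod_erase _ _ (Finset.mem_range.mpr (hc 0))]
        congr 1
        rw [sub_self, zero_add]
      have etail : ∀ s ∈ Finset.range r,
          x - u (q * m + s) = u (c 0) - u s + π * (y - u m) :=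
        fun s hs => hterm m s (by have := Finset.mem_range.mp hs; omega)
      have esplit : ∏ k' ∈ Finset.range m, ((π * (y - u k'))
            * ∏ s ∈ (Finset.range q).erase (c 0), (u (c 0) - u s + π * (y - u k')))
          = (π ^ m * ∏ k' ∈ Finset.range m, (y - u k'))
            * ∏ k' ∈ Finset.range m, ∏ s ∈ (Finset.range q).erase (c 0),
                (u (c 0) - u s + π * (y - u k')) := by
        rw [Finset.prod_mul_distrib, Finset.prod_mul_distrib, Finset.prod_const,
          Finset.card_range]
      rw [Finset.prod_congr rfl e1, esplit, Finset.prod_congr rfl etail]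
    have Eden : (∏ k ∈ Finset.range n, (u n - u k))
        = π ^ m * (∏ k' ∈ Finset.range m, (u m - u k'))
          * (∏ k' ∈ Finset.range m, ∏ s ∈ (Finset.range q).erase r,
              (u r - u s + π * (u m - u k')))
          * (∏ s ∈ Finset.range r, (u r - u s)) := by
      conv_lhs => rw [← hn]
      rw [Finset.prod_range_add, lucas_prod_range_mul]
      have e1 : ∀ k' ∈ Finset.range m,
          (∏ s ∈ Finset.range q, (u (q * m + r) - u (q * k' + s)))
            = (π * (u m - u k')) * ∏ s ∈ (Finset.range q).erase r,
                (u r - u s + π * (u m - u k')) := by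
        intro k' _
        rw [Finset.prod_congr rfl (fun s hs => hterm' k' s (Finset.mem_range.mp hs)),
          ← Finset.mul_prod_erase _ _ (Finset.mem_range.mpr hrq)]
        congr 1
        rw [sub_self, zero_add]
      have etail : ∀ s ∈ Finset.range r,
          u (q * m + r) - u (q * m + s) = u r - u s := by
        intro s hs
        rw [hterm' m s (by have := Finset.mem_range.mp hs; omega), sub_self, mul_zero,
          add_zero]
      have esplit : ∏ k' ∈ Finset.range m, ((π * (u m - u k'))
            * ∏ s ∈ (Finset.range q).erase r, (u r - u s + π * (u m - u k')))
          = (π ^ m * ∏ k' ∈ Finset.range m, (u m - u k'))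
            * ∏ k' ∈ Finset.range m, ∏ s ∈ (Finset.range q).erase r,
                (u r - u s + π * (u m - u k')) := by
        rw [Finset.prod_mul_distrib, Finset.prod_mul_distrib, Finset.prod_const,
          Finset.card_range]
      rw [Finset.prod_congr rfl e1, esplit, Finset.prod_congr rfl etail]
    have E1 := hF n x
    rw [Enum, Eden, ← hF m y] at E1
    have E2 : (∏ s ∈ Finset.range r, (u r - u s))
          * (∏ k' ∈ Finset.range m, ∏ s ∈ (Finset.range q).erase r,
              (u r - u s + π * (u m - u k'))) * F n x
        = F m y * (∏ k' ∈ Finset.range m, ∏ s ∈ (Finset.range q).erase (c 0),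
              (u (c 0) - u s + π * (y - u k')))
          * (∏ s ∈ Finset.range r, (u (c 0) - u s + π * (y - u m))) := by
      have hnz : (π ^ m * ∏ k' ∈ Finset.range m, (u m - u k')) ≠ 0 :=
        mul_ne_zero (pow_ne_zero _ hπ0) (hDen m)
      apply mul_left_cancel₀ hnz
      linear_combination E1
    have hφA : φ (∏ k' ∈ Finset.range m, ∏ s ∈ (Finset.range q).erase (c 0),
        (u (c 0) - u s + π * (y - u k')))
        = (∏ w ∈ ((Finset.range q).image (fun s => φ (u s))).erase 0, w) ^ m := by
      have e : ∀ k' ∈ Finset.range m,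
          φ (∏ s ∈ (Finset.range q).erase (c 0), (u (c 0) - u s + π * (y - u k')))
            = ∏ w ∈ ((Finset.range q).image (fun s => φ (u s))).erase 0, w := by
        intro k' _
        rw [map_prod, ← L4 (c 0) (hc 0)]
        refine Finset.prod_congr rfl fun s hs => ?_
        rw [map_add, map_sub, map_mul, hφπ, zero_mul, add_zero]
      rw [map_prod, Finset.prod_congr rfl e, Finset.prod_const, Finset.card_range]
    have hφA' : φ (∏ k' ∈ Finset.range m, ∏ s ∈ (Finset.range q).erase r,
        (u r - u s + π * (u m - u k')))
        = (∏ w ∈ ((Finset.range q).image (fun s => φ (u s))).erase 0, w) ^ m := by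
      have e : ∀ k' ∈ Finset.range m,
          φ (∏ s ∈ (Finset.range q).erase r, (u r - u s + π * (u m - u k')))
            = ∏ w ∈ ((Finset.range q).image (fun s => φ (u s))).erase 0, w := by
        intro k' _
        rw [map_prod, ← L4 r hrq]
        refine Finset.prod_congr rfl fun s hs => ?_
        rw [map_add, map_sub, map_mul, hφπ, zero_mul, add_zero]
      rw [map_prod, Finset.prod_congr rfl e, Finset.prod_const, Finset.card_range]
    have hφB : φ (∏ s ∈ Finset.range r, (u (c 0) - u s + π * (y - u m)))
        = φ (∏ s ∈ Finset.range r, (u r - u s)) * φ (F r (u (c 0))) := by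
      rw [map_prod]
      have e : ∀ s ∈ Finset.range r,
          φ (u (c 0) - u s + π * (y - u m)) = φ (u (c 0) - u s) := by
        intro s _
        rw [map_add, map_mul, hφπ, zero_mul, add_zero]
      rw [Finset.prod_congr rfl e, ← map_prod, ← hF r (u (c 0)), map_mul]
    have hP0 : (∏ w ∈ ((Finset.range q).image (fun s => φ (u s))).erase 0, w) ≠ 0 := by
      rw [← L4 r hrq, Finset.prod_ne_zero_iff]
      intro s hs
      refine sub_ne_zero.mpr fun h => ?_
      have h1 := L1 r s hrq (Finset.mem_range.mp (Finset.mem_of_mem_erase hs)) ((heq _ _).mp h)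
      exact (Finset.ne_of_mem_erase hs) h1.symm
    have hDr0 : φ (∏ s ∈ Finset.range r, (u r - u s)) ≠ 0 := by
      rw [map_prod, Finset.prod_ne_zero_iff]
      intro s hs
      have hsr := Finset.mem_range.mp hs
      rw [map_sub]
      refine sub_ne_zero.mpr fun h => ?_
      have h1 := L1 r s hrq (by omega) ((heq _ _).mp h)
      omega
    have E3 : φ (F n x) = φ (F m y) * φ (F r (u (c 0))) := by
      have h0 := congrArg φ E2
      simp only [map_mul] at h0
      rw [hφA, hφA', hφB] at h0
      have hnz : (∏ w ∈ ((Finset.range q).image (fun s => φ (u s))).erase 0, w) ^ m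
          * φ (∏ s ∈ Finset.range r, (u r - u s)) ≠ 0 :=
        mul_ne_zero (pow_ne_zero _ hP0) hDr0
      apply mul_left_cancel₀ hnz
      linear_combination h0
    have hgoal : φ (∏ i ∈ Finset.range (Nat.digits q n).length,
        F ((Nat.digits q n).getD i 0) (u (c i))) = φ (F m y) * φ (F r (u (c 0))) := by
      have hsplit : ∏ i ∈ Finset.range (Nat.digits q n).length,
          F ((Nat.digits q n).getD i 0) (u (c i))
          = (∏ i ∈ Finset.range (Nat.digits q m).length,
              F ((Nat.digits q m).getD i 0) (u (c (i + 1)))) * F r (u (c 0)) := by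
        rw [hdig]
        simp only [List.length_cons]
        rw [Finset.prod_range_succ']
        simp only [List.getD_cons_succ, List.getD_cons_zero]
      rw [hsplit, map_mul, ← ((heq _ _).mpr IHm)]
    exact (heq _ _).mp (by rw [E3, hgoal])
end

section
/- Let V be a DVR with maximal ideal 𝔪, residue field of cardinality q, sequence (u_n) and polynomials (F_n) as above. Let α, β be finite tuples over the representative set R, with deg(α) = r (its length), and let m ≥ 0 be an integer. Write m(r−1,0) = Σ_{i=0}^{r−1} m_i q^i (truncation of m to its first r base-q digits) and m(r) = Σ_{i≥0} m_{i+r} q^i (shift of m by r digits). Then F_m(u_{z_{α∙β}}) ≡ F_{m(r−1,0)}(u_{z_α}) · F_{m(r)}(u_{z_β}) (mod 𝔪). -/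
theorem prod_range_mul_aux {M : Type*} [CommMonoid M] (f : ℕ → M) (n : ℕ) :
    ∀ d, ∏ k ∈ Finset.range (n * d), f k
      = ∏ j ∈ Finset.range d, ∏ i ∈ Finset.range n, f (n * j + i)
  | 0 => by simp
  | (d + 1) => by
      rw [Nat.mul_succ, Finset.prod_range_add, prod_range_mul_aux f n d,
        Finset.prod_range_succ]

theorem u_split {V : Type*} [CommRing V] {q : ℕ} {π : V} {u : ℕ → V}
    (hq : 2 ≤ q) (hu0 : u 0 = 0)
    (hudig : ∀ n : ℕ, u n = ∑ i ∈ Finset.range (Nat.digits q n).length,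
        u ((Nat.digits q n).getD i 0) * π ^ i)
    (k' k'' : ℕ) (h : k' < q) : u (k' + q * k'') = u k' + π * u k'' := by
  rcases Nat.eq_zero_or_pos k'' with h0 | hpos
  · subst h0; simp [hu0]
  · have hqk : 0 < q * k'' := Nat.mul_pos (by omega) hpos
    have hn : 0 < k' + q * k'' := by omega
    have hd : Nat.digits q (k' + q * k'') = k' :: Nat.digits q k'' := by
      rw [Nat.digits_def' (by omega : 1 < q) hn]
      congr 1
      · rw [Nat.add_mul_mod_self_left, Nat.mod_eq_of_lt h]
      · congr 1
        rw [Nat.add_mul_div_left _ _ (by omega : 0 < q), Nat.div_eq_of_lt h, zero_add]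
    rw [hudig (k' + q * k''), hd, hudig k'']
    simp only [List.length_cons]
    rw [Finset.sum_range_succ']
    simp only [List.getD_cons_succ, List.getD_cons_zero, pow_zero, mul_one]
    rw [add_comm, Finset.mul_sum]
    congr 1
    exact Finset.sum_congr rfl fun i _ => by ring

theorem rep_unique {V : Type*} [CommRing V] [IsLocalRing V] {q : ℕ} {u : ℕ → V}
    (hurep : ∀ a : V, ∃! i : ℕ, i < q ∧ a - u i ∈ IsLocalRing.maximalIdeal V)
    {i j : ℕ} (hi : i < q) (hj : j < q)
    (h : u i - u j ∈ IsLocalRing.maximalIdeal V) : i = j := by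
  obtain ⟨c, -, hc⟩ := hurep (u i)
  have h1 : i = c := hc i ⟨hi, by simp⟩
  have h2 : j = c := hc j ⟨hj, h⟩
  omega

theorem u_inj_aux {V : Type*} [CommRing V] [IsDomain V] [IsLocalRing V]
    {q : ℕ} {π : V} {u : ℕ → V}
    (hq : 2 ≤ q) (hπ : Irreducible π)
    (hmax : IsLocalRing.maximalIdeal V = Ideal.span {π})
    (hu0 : u 0 = 0)
    (hurep : ∀ a : V, ∃! i : ℕ, i < q ∧ a - u i ∈ IsLocalRing.maximalIdeal V)
    (hudig : ∀ n : ℕ, u n = ∑ i ∈ Finset.range (Nat.digits q n).length,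
        u ((Nat.digits q n).getD i 0) * π ^ i) :
    ∀ s n k : ℕ, n + k ≤ s → u n = u k → n = k := by
  intro s
  induction s with
  | zero => intro n k hs _; omega
  | succ s ih =>
    intro n k hs h
    by_cases hcase : n < q ∧ k < q
    · exact rep_unique hurep hcase.1 hcase.2 (by rw [h, sub_self]; exact zero_mem _)
    · have hq0 : 0 < q := by omega
      have hn : u n = u (n % q) + π * u (n / q) := by
        conv_lhs => rw [← Nat.mod_add_div n q]
        exact u_split hq hu0 hudig _ _ (Nat.mod_lt _ hq0)
      have hk : u k = u (k % q) + π * u (k / q) := by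
        conv_lhs => rw [← Nat.mod_add_div k q]
        exact u_split hq hu0 hudig _ _ (Nat.mod_lt _ hq0)
      have hmod : n % q = k % q := by
        apply rep_unique hurep (Nat.mod_lt _ hq0) (Nat.mod_lt _ hq0)
        rw [hmax, Ideal.mem_span_singleton]
        refine ⟨u (k / q) - u (n / q), ?_⟩
        have h' := h
        rw [hn, hk] at h'
        linear_combination h'
      have hdiv : u (n / q) = u (k / q) := by
        rw [hn, hk, hmod] at h
        exact mul_left_cancel₀ hπ.ne_zero (add_left_cancel h)
      have hlt : n / q + k / q ≤ s := by
        have h1 := Nat.div_le_self n q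
        have h2 := Nat.div_le_self k q
        rcases not_and_or.mp hcase with hn' | hk'
        · have h3 := Nat.div_lt_self (by omega : 0 < n) (by omega : 1 < q)
          omega
        · have h3 := Nat.div_lt_self (by omega : 0 < k) (by omega : 1 < q)
          omega
      have hdq := ih _ _ hlt hdiv
      calc n = n % q + q * (n / q) := (Nat.mod_add_div n q).symm
        _ = k % q + q * (k / q) := by rw [hmod, hdq]
        _ = k := Nat.mod_add_div k q

theorem F_single
    {V : Type*} [CommRing V] [IsDomain V] [IsDiscreteValuationRing V]
    {q : ℕ} (hq : 2 ≤ q)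
    {π : V} (hπ : Irreducible π)
    (hmax : IsLocalRing.maximalIdeal V = Ideal.span {π})
    {u : ℕ → V} (hu0 : u 0 = 0)
    (hurep : ∀ a : V, ∃! i : ℕ, i < q ∧ a - u i ∈ IsLocalRing.maximalIdeal V)
    (hudig : ∀ n : ℕ, u n = ∑ i ∈ Finset.range (Nat.digits q n).length,
        u ((Nat.digits q n).getD i 0) * π ^ i)
    {F : ℕ → V → V}
    (hF : ∀ (n : ℕ) (x : V),
        (∏ k ∈ Finset.range n, (u n - u k)) * F n x = ∏ k ∈ Finset.range n, (x - u k))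
    (a b m : ℕ) (ha : a < q) :
    F m (u (a + q * b)) - F (m % q) (u a) * F (m / q) (u b) ∈
      IsLocalRing.maximalIdeal V := by
  have hq0 : 0 < q := by omega
  have hm'q : m % q < q := Nat.mod_lt _ hq0
  set ρ := IsLocalRing.residue V with hρdef
  have hmem : ∀ x : V, x ∈ IsLocalRing.maximalIdeal V ↔ π ∣ x := by
    intro x; rw [hmax, Ideal.mem_span_singleton]
  have hρ0 : ∀ x : V, ρ x = 0 ↔ x ∈ IsLocalRing.maximalIdeal V := fun x =>
    Ideal.Quotient.eq_zero_iff_mem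
  have hρπ : ρ π = 0 := (hρ0 π).2 ((hmem π).2 dvd_rfl)
  have einj : ∀ i j, i < q → j < q → ρ (u i) = ρ (u j) → i = j := by
    intro i j hi hj hij
    refine rep_unique hurep hi hj ((hρ0 _).1 ?_)
    rw [map_sub, hij, sub_self]
  have esurj : ∀ y : IsLocalRing.ResidueField V, ∃ i, i < q ∧ ρ (u i) = y := by
    intro y
    obtain ⟨v, rfl⟩ := IsLocalRing.residue_surjective (R := V) y
    obtain ⟨i, ⟨hi, hm'⟩, -⟩ := hurep v
    have h0 : ρ (v - u i) = 0 := (hρ0 _).2 hm'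
    rw [map_sub, sub_eq_zero] at h0
    exact ⟨i, hi, h0.symm⟩
  have hρsubne : ∀ i j, i < q → j < q → i ≠ j → ρ (u i - u j) ≠ 0 := by
    intro i j hi hj hne h0
    exact hne (rep_unique hurep hi hj ((hρ0 _).1 h0))
  have hPne : ∀ c, c < q → ρ (∏ k ∈ (Finset.range q).erase c, (u c - u k)) ≠ 0 := by
    intro c hc
    rw [map_prod, Finset.prod_ne_zero_iff]
    intro k hk
    obtain ⟨hne, hkq⟩ := Finset.mem_erase.mp hk
    exact hρsubne c k hc (Finset.mem_range.mp hkq) (Ne.symm hne)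
  have Pcongr : ∀ a₁ a₂, a₁ < q → a₂ < q →
      ρ (∏ k ∈ (Finset.range q).erase a₁, (u a₁ - u k))
        = ρ (∏ k ∈ (Finset.range q).erase a₂, (u a₂ - u k)) := by
    intro a₁ a₂ h₁ h₂
    choose σ hσq hσv using fun k : ℕ => esurj (ρ (u a₂) - (ρ (u a₁) - ρ (u k)))
    choose τ hτq hτv using fun k : ℕ => esurj (ρ (u a₁) - (ρ (u a₂) - ρ (u k)))
    rw [map_prod, map_prod]
    refine Finset.prod_nbij' σ τ ?_ ?_ ?_ ?_ ?_
    · intro k hk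
      obtain ⟨hne, hkq⟩ := Finset.mem_erase.mp hk
      refine Finset.mem_erase.mpr ⟨?_, Finset.mem_range.mpr (hσq k)⟩
      intro hEq
      have hv := hσv k
      rw [hEq] at hv
      exact hne (einj k a₁ (Finset.mem_range.mp hkq) h₁ (by linear_combination -hv))
    · intro k hk
      obtain ⟨hne, hkq⟩ := Finset.mem_erase.mp hk
      refine Finset.mem_erase.mpr ⟨?_, Finset.mem_range.mpr (hτq k)⟩
      intro hEq
      have hv := hτv k
      rw [hEq] at hv
      exact hne (einj k a₂ (Finset.mem_range.mp hkq) h₂ (by linear_combination -hv))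
    · intro k hk
      obtain ⟨hne, hkq⟩ := Finset.mem_erase.mp hk
      apply einj _ _ (hτq _) (Finset.mem_range.mp hkq)
      rw [hτv (σ k), hσv k]
      ring
    · intro k hk
      obtain ⟨hne, hkq⟩ := Finset.mem_erase.mp hk
      apply einj _ _ (hσq _) (Finset.mem_range.mp hkq)
      rw [hσv (τ k), hτv k]
      ring
    · intro k hk
      rw [map_sub, map_sub, hσv k]
      ring
  -- splitting of u at digits
  have hx : u (a + q * b) = u a + π * u b := u_split hq hu0 hudig a b ha
  have hum : u m = u (m % q) + π * u (m / q) := by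
    conv_lhs => rw [← Nat.mod_add_div m q]
    exact u_split hq hu0 hudig _ _ hm'q
  have hxk : ∀ j i, i < q → u (a + q * b) - u (q * j + i) = u a - u i + π * (u b - u j) := by
    intro j i hi
    rw [hx, add_comm (q * j) i, u_split hq hu0 hudig i j hi]
    ring
  have humk : ∀ j i, i < q →
      u m - u (q * j + i) = u (m % q) - u i + π * (u (m / q) - u j) := by
    intro j i hi
    rw [hum, add_comm (q * j) i, u_split hq hu0 hudig i j hi]
    ring
  have decomp : ∀ f : ℕ → V, ∏ k ∈ Finset.range m, f k
      = (∏ j ∈ Finset.range (m / q), ∏ i ∈ Finset.range q, f (q * j + i)) *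
        ∏ i ∈ Finset.range (m % q), f (q * (m / q) + i) := by
    intro f
    conv_lhs => rw [← Nat.div_add_mod m q]
    rw [Finset.prod_range_add, prod_range_mul_aux]
  have block : ∀ c, c < q → ∀ w : V,
      ∏ i ∈ Finset.range q, (u c - u i + π * w)
        = π * w * ∏ i ∈ (Finset.range q).erase c, (u c - u i + π * w) := by
    intro c hc w
    rw [← Finset.mul_prod_erase _ _ (Finset.mem_range.mpr hc), sub_self, zero_add]
  have blockρ : ∀ c, ∀ w : V,
      ρ (∏ i ∈ (Finset.range q).erase c, (u c - u i + π * w))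
        = ρ (∏ i ∈ (Finset.range q).erase c, (u c - u i)) := by
    intro c w
    rw [map_prod, map_prod]
    refine Finset.prod_congr rfl fun k _ => ?_
    rw [map_add, map_mul, hρπ, zero_mul, add_zero]
  -- numerator decomposition
  have hNum : ∏ k ∈ Finset.range m, (u (a + q * b) - u k)
      = π ^ (m / q) *
        ((∏ j ∈ Finset.range (m / q), (u b - u j)) *
         (∏ j ∈ Finset.range (m / q),
            ∏ i ∈ (Finset.range q).erase a, (u a - u i + π * (u b - u j))) *
         ∏ i ∈ Finset.range (m % q), (u a - u i + π * (u b - u (m / q)))) := by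
    rw [decomp]
    have h1 : ∀ j ∈ Finset.range (m / q),
        ∏ i ∈ Finset.range q, (u (a + q * b) - u (q * j + i))
          = π * (u b - u j) *
            ∏ i ∈ (Finset.range q).erase a, (u a - u i + π * (u b - u j)) := by
      intro j _
      rw [Finset.prod_congr rfl fun i hi => hxk j i (Finset.mem_range.mp hi), block a ha]
    have h2 : ∀ i ∈ Finset.range (m % q),
        u (a + q * b) - u (q * (m / q) + i) = u a - u i + π * (u b - u (m / q)) :=
      fun i hi => hxk (m / q) i (lt_trans (Finset.mem_range.mp hi) hm'q)
    rw [Finset.prod_congr rfl h1, Finset.prod_congr rfl h2,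
      Finset.prod_mul_distrib, Finset.prod_mul_distrib, Finset.prod_const,
      Finset.card_range]
    ring
  have hDen : ∏ k ∈ Finset.range m, (u m - u k)
      = π ^ (m / q) *
        ((∏ j ∈ Finset.range (m / q), (u (m / q) - u j)) *
         (∏ j ∈ Finset.range (m / q),
            ∏ i ∈ (Finset.range q).erase (m % q),
              (u (m % q) - u i + π * (u (m / q) - u j))) *
         ∏ i ∈ Finset.range (m % q), (u (m % q) - u i)) := by
    rw [decomp]
    have h1 : ∀ j ∈ Finset.range (m / q),
        ∏ i ∈ Finset.range q, (u m - u (q * j + i))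
          = π * (u (m / q) - u j) *
            ∏ i ∈ (Finset.range q).erase (m % q),
              (u (m % q) - u i + π * (u (m / q) - u j)) := by
      intro j _
      rw [Finset.prod_congr rfl fun i hi => humk j i (Finset.mem_range.mp hi),
        block (m % q) hm'q]
    have h2 : ∀ i ∈ Finset.range (m % q),
        u m - u (q * (m / q) + i) = u (m % q) - u i := by
      intro i hi
      rw [humk (m / q) i (lt_trans (Finset.mem_range.mp hi) hm'q), sub_self, mul_zero,
        add_zero]
    rw [Finset.prod_congr rfl h1, Finset.prod_congr rfl h2,
      Finset.prod_mul_distrib, Finset.prod_mul_distrib, Finset.prod_const,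
      Finset.card_range]
    ring
  -- residues of the auxiliary products
  have hρH : ρ (∏ j ∈ Finset.range (m / q),
      ∏ i ∈ (Finset.range q).erase a, (u a - u i + π * (u b - u j)))
      = ρ (∏ k ∈ (Finset.range q).erase a, (u a - u k)) ^ (m / q) := by
    rw [map_prod]
    rw [Finset.prod_congr rfl fun j _ => blockρ a (u b - u j)]
    rw [Finset.prod_const, Finset.card_range]
  have hρH' : ρ (∏ j ∈ Finset.range (m / q),
      ∏ i ∈ (Finset.range q).erase (m % q), (u (m % q) - u i + π * (u (m / q) - u j)))
      = ρ (∏ k ∈ (Finset.range q).erase (m % q), (u (m % q) - u k)) ^ (m / q) := by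
    rw [map_prod]
    rw [Finset.prod_congr rfl fun j _ => blockρ (m % q) (u (m / q) - u j)]
    rw [Finset.prod_const, Finset.card_range]
  have hρT : ρ (∏ i ∈ Finset.range (m % q), (u a - u i + π * (u b - u (m / q))))
      = ρ (∏ i ∈ Finset.range (m % q), (u a - u i)) := by
    rw [map_prod, map_prod]
    refine Finset.prod_congr rfl fun k _ => ?_
    rw [map_add, map_mul, hρπ, zero_mul, add_zero]
  -- key congruence
  have hkey : π ∣
      ((∏ j ∈ Finset.range (m / q),
          ∏ i ∈ (Finset.range q).erase a, (u a - u i + π * (u b - u j))) *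
        (∏ i ∈ Finset.range (m % q), (u a - u i + π * (u b - u (m / q)))) -
       (∏ j ∈ Finset.range (m / q),
          ∏ i ∈ (Finset.range q).erase (m % q),
            (u (m % q) - u i + π * (u (m / q) - u j))) *
        ∏ i ∈ Finset.range (m % q), (u a - u i)) := by
    rw [← hmem, ← hρ0, map_sub, map_mul, map_mul, hρH, hρH', hρT,
      Pcongr a (m % q) ha hm'q]
    ring
  obtain ⟨w, hw⟩ := hkey
  -- the three exact identities
  have E1 := hF m (u (a + q * b))
  rw [hDen, hNum] at E1
  have E1' : ((∏ j ∈ Finset.range (m / q), (u (m / q) - u j)) *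
         (∏ j ∈ Finset.range (m / q),
            ∏ i ∈ (Finset.range q).erase (m % q),
              (u (m % q) - u i + π * (u (m / q) - u j))) *
         ∏ i ∈ Finset.range (m % q), (u (m % q) - u i)) * F m (u (a + q * b))
      = (∏ j ∈ Finset.range (m / q), (u b - u j)) *
         (∏ j ∈ Finset.range (m / q),
            ∏ i ∈ (Finset.range q).erase a, (u a - u i + π * (u b - u j))) *
         ∏ i ∈ Finset.range (m % q), (u a - u i + π * (u b - u (m / q))) := by
    apply mul_left_cancel₀ (pow_ne_zero (m / q) hπ.ne_zero)
    linear_combination E1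
  have E2 := hF (m % q) (u a)
  have E3 := hF (m / q) (u b)
  -- nonvanishing facts
  have huinj : ∀ n k : ℕ, u n = u k → n = k := fun n k h =>
    u_inj_aux hq hπ hmax hu0 hurep hudig (n + k) n k le_rfl h
  have hCMne : (∏ j ∈ Finset.range (m / q), (u (m / q) - u j)) ≠ 0 := by
    rw [Finset.prod_ne_zero_iff]
    intro j hj
    have hjlt := Finset.mem_range.mp hj
    exact sub_ne_zero.mpr fun hEq => absurd (huinj _ _ hEq) (by omega)
  have hρC'ne : ρ (∏ i ∈ Finset.range (m % q), (u (m % q) - u i)) ≠ 0 := by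
    rw [map_prod, Finset.prod_ne_zero_iff]
    intro i hi
    have hilt := Finset.mem_range.mp hi
    exact hρsubne (m % q) i hm'q (by omega) (by omega)
  have hρH'ne : ρ (∏ j ∈ Finset.range (m / q),
      ∏ i ∈ (Finset.range q).erase (m % q),
        (u (m % q) - u i + π * (u (m / q) - u j))) ≠ 0 := by
    rw [hρH']
    exact pow_ne_zero _ (hPne (m % q) hm'q)
  -- main cancellation
  have hmain : (∏ j ∈ Finset.range (m / q), (u (m / q) - u j)) *
      (((∏ j ∈ Finset.range (m / q),
            ∏ i ∈ (Finset.range q).erase (m % q),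
              (u (m % q) - u i + π * (u (m / q) - u j))) *
        (∏ i ∈ Finset.range (m % q), (u (m % q) - u i))) *
        (F m (u (a + q * b)) - F (m % q) (u a) * F (m / q) (u b)))
      = (∏ j ∈ Finset.range (m / q), (u (m / q) - u j)) *
        (F (m / q) (u b) * (π * w)) := by
    linear_combination E1' -
      ((∏ j ∈ Finset.range (m / q),
          ∏ i ∈ (Finset.range q).erase (m % q),
            (u (m % q) - u i + π * (u (m / q) - u j))) * F (m / q) (u b) *
        (∏ j ∈ Finset.range (m / q), (u (m / q) - u j))) * E2 -
      ((∏ j ∈ Finset.range (m / q),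
          ∏ i ∈ (Finset.range q).erase (m % q),
            (u (m % q) - u i + π * (u (m / q) - u j))) *
        (∏ i ∈ Finset.range (m % q), (u a - u i)) + π * w) * E3 +
      (∏ j ∈ Finset.range (m / q), (u b - u j)) * hw
  have hmain2 := mul_left_cancel₀ hCMne hmain
  rw [hmem]
  have hdvd : π ∣ (∏ j ∈ Finset.range (m / q),
      ∏ i ∈ (Finset.range q).erase (m % q),
        (u (m % q) - u i + π * (u (m / q) - u j))) *
      ((∏ i ∈ Finset.range (m % q), (u (m % q) - u i)) *
        (F m (u (a + q * b)) - F (m % q) (u a) * F (m / q) (u b))) :=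
    ⟨F (m / q) (u b) * w, by linear_combination hmain2⟩
  have hπp : Prime π := hπ.prime
  rcases hπp.dvd_mul.mp hdvd with h | h
  · exact absurd ((hρ0 _).2 ((hmem _).2 h)) hρH'ne
  · rcases hπp.dvd_mul.mp h with h' | h'
    · exact absurd ((hρ0 _).2 ((hmem _).2 h')) hρC'ne
    · exact h'


/-- Lemma 3.3 of the paper: for tuples `α, β` over the representatives, with
`r = deg α`, and any `m ≥ 0`, writing `m % q ^ r` for the truncation of `m` to its
first `r` base-`q` digits and `m / q ^ r` for the shift of `m` by `r` digits,
`F m (u (z (α∙β))) ≡ F (m % q^r) (u (z α)) * F (m / q^r) (u (z β)) (mod 𝔪)`. -/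
theorem F_at_concat
    (V : Type*) [CommRing V] [IsDomain V] [IsDiscreteValuationRing V]
    (q : ℕ) (hq : 2 ≤ q)
    (π : V) (hπ : Irreducible π)
    (hmax : IsLocalRing.maximalIdeal V = Ideal.span {π})
    (u : ℕ → V) (hu0 : u 0 = 0)
    (hurep : ∀ a : V, ∃! i : ℕ, i < q ∧ a - u i ∈ IsLocalRing.maximalIdeal V)
    (hudig : ∀ n : ℕ, u n = ∑ i ∈ Finset.range (Nat.digits q n).length,
        u ((Nat.digits q n).getD i 0) * π ^ i)
    (F : ℕ → V → V) (hF0 : ∀ x : V, F 0 x = 1)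
    (hF : ∀ (n : ℕ) (x : V),
        (∏ k ∈ Finset.range n, (u n - u k)) * F n x = ∏ k ∈ Finset.range n, (x - u k))
    (α β : List ℕ) (hα : ∀ d ∈ α, d < q) (hβ : ∀ d ∈ β, d < q)
    (hαne : α ≠ []) (hβne : β ≠ []) (m : ℕ) :
    F m (u ((Nat.ofDigits q (α ++ β) : ℕ))) -
        F (m % q ^ α.length) (u ((Nat.ofDigits q α : ℕ))) *
          F (m / q ^ α.length) (u ((Nat.ofDigits q β : ℕ))) ∈
      IsLocalRing.maximalIdeal V := by
  have main : ∀ (γ : List ℕ), (∀ d ∈ γ, d < q) → ∀ (N m : ℕ),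
      F m (u (Nat.ofDigits q γ + q ^ γ.length * N)) -
        F (m % q ^ γ.length) (u (Nat.ofDigits q γ)) * F (m / q ^ γ.length) (u N) ∈
      IsLocalRing.maximalIdeal V := by
    intro γ
    induction γ with
    | nil =>
      intro _ N m
      simp only [List.length_nil, pow_zero, Nat.mod_one, Nat.div_one, Nat.ofDigits_nil,
        one_mul, zero_add, hF0, Nat.cast_id]
      rw [sub_self]
      exact zero_mem _

    | cons d γ' ih =>
      intro hγ N m
      have hd : d < q := hγ d (List.mem_cons_self (a := d) (l := γ'))
      have hγ' : ∀ x ∈ γ', x < q := fun x hx => hγ x (List.mem_cons_of_mem d hx)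
      have hnum : (Nat.ofDigits q (d :: γ') : ℕ) + q ^ (d :: γ').length * N
          = d + q * ((Nat.ofDigits q γ' : ℕ) + q ^ γ'.length * N) := by
        push_cast [Nat.ofDigits_cons, List.length_cons, pow_succ']
        try ring
      have hcons : (Nat.ofDigits q (d :: γ') : ℕ) = d + q * (Nat.ofDigits q γ' : ℕ) := by
        push_cast [Nat.ofDigits_cons]
        try ring
      have step1 := F_single hq hπ hmax hu0 hurep hudig hF d
        ((Nat.ofDigits q γ' : ℕ) + q ^ γ'.length * N) m hd
      have step2 := ih hγ' N (m / q)
      have step3 := F_single hq hπ hmax hu0 hurep hudig hF d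
        (Nat.ofDigits q γ' : ℕ) (m % q ^ (d :: γ').length) hd
      rw [← hcons] at step3
      have e1 : m % q ^ (d :: γ').length % q = m % q :=
        Nat.mod_mod_of_dvd m (dvd_pow_self q (by simp))
      have e2 : m % q ^ (d :: γ').length / q = m / q % q ^ γ'.length := by
        rw [List.length_cons, pow_succ', Nat.mod_mul_right_div_self]
      have e3 : m / q / q ^ γ'.length = m / q ^ (d :: γ').length := by
        rw [List.length_cons, pow_succ', Nat.div_div_eq_div_mul]
      rw [e1, e2] at step3
      rw [e3] at step2
      rw [hnum]
      have hiden : F m (u (d + q * ((Nat.ofDigits q γ' : ℕ) + q ^ γ'.length * N))) -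
          F (m % q ^ (d :: γ').length) (u (Nat.ofDigits q (d :: γ'))) *
            F (m / q ^ (d :: γ').length) (u N)
          = (F m (u (d + q * ((Nat.ofDigits q γ' : ℕ) + q ^ γ'.length * N))) -
              F (m % q) (u d) *
                F (m / q) (u ((Nat.ofDigits q γ' : ℕ) + q ^ γ'.length * N)))
            + F (m % q) (u d) *
              (F (m / q) (u ((Nat.ofDigits q γ' : ℕ) + q ^ γ'.length * N)) -
                F (m / q % q ^ γ'.length) (u (Nat.ofDigits q γ')) *
                  F (m / q ^ (d :: γ').length) (u N))
            + (- F (m / q ^ (d :: γ').length) (u N)) *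
              (F (m % q ^ (d :: γ').length) (u (Nat.ofDigits q (d :: γ'))) -
                F (m % q) (u d) * F (m / q % q ^ γ'.length) (u (Nat.ofDigits q γ'))) := by
        ring
      rw [hiden]
      exact add_mem (add_mem step1 (Ideal.mul_mem_left _ _ step2))
        (Ideal.mul_mem_left _ _ step3)
  have happ : (Nat.ofDigits q (α ++ β) : ℕ)
      = (Nat.ofDigits q α : ℕ) + q ^ α.length * (Nat.ofDigits q β : ℕ) := by
    rw [Nat.ofDigits_append]
  rw [happ]
  exact main α hα (Nat.ofDigits q β) m
end

section
/- Let V be a DVR with maximal ideal 𝔪 and residue field of cardinality q, and fix ℘ ∈ V whose residue generates the cyclic group (V/𝔪)^×. For a tuple α over R and j ∈ ℤ define S_j(α) = { m ∈ ℤ : 0 ≤ m ≤ z_α and F_m(u_{z_α}) ≡ ℘^j (mod 𝔪) }. Then for any tuples α, β and any n ∈ ℤ, the map (ℓ,m) ↦ ℓ + q^{deg(α)}·m is a bijection from ⋃_{j=0}^{q−2} S_j(α) × S_{n−j}(β) onto S_n(α∙β). -/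
open Finset
set_option linter.unusedSectionVars false

namespace MainAux

variable {V : Type*} [CommRing V] [IsDomain V] [IsDiscreteValuationRing V]

/-- product ∏_{k<m} (u n - u k) -/
def Pf (u : ℕ → V) (n m : ℕ) : V := ∏ k ∈ Finset.range m, (u n - u k)

lemma udist {q : ℕ} {u : ℕ → V}
    (hurep : ∀ a : V, ∃! i : ℕ, i < q ∧ a - u i ∈ IsLocalRing.maximalIdeal V)
    {i j : ℕ} (hi : i < q) (hj : j < q) (hij : i ≠ j) :
    u i - u j ∉ IsLocalRing.maximalIdeal V := by
  intro h
  obtain ⟨c, _, hun⟩ := hurep (u i)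
  have h1 : i = c := hun i ⟨hi, by simp⟩
  have h2 : j = c := hun j ⟨hj, h⟩
  exact hij (h1.trans h2.symm)

lemma rho_u_ne {q : ℕ} {u : ℕ → V}
    (hurep : ∀ a : V, ∃! i : ℕ, i < q ∧ a - u i ∈ IsLocalRing.maximalIdeal V)
    {i j : ℕ} (hi : i < q) (hj : j < q) (hij : i ≠ j) :
    IsLocalRing.residue V (u i - u j) ≠ 0 := by
  intro h
  exact udist hurep hi hj hij (Ideal.Quotient.eq_zero_iff_mem.mp h)

lemma udigit {q : ℕ} {π : V} {u : ℕ → V} (hq : 2 ≤ q) (hu0 : u 0 = 0)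
    (hudig : ∀ n : ℕ, u n = ∑ i ∈ Finset.range (Nat.digits q n).length,
        u ((Nat.digits q n).getD i 0) * π ^ i)
    {r : ℕ} (hr : r < q) (s : ℕ) : u (r + q * s) = u r + π * u s := by
  rcases Nat.eq_zero_or_pos s with rfl | hs
  · simp [hu0]
  · have hd : Nat.digits q (r + q * s) = r :: Nat.digits q s := by
      rw [Nat.digits_def' (by omega : 1 < q) (by positivity)]
      congr 1
      · rw [Nat.add_mul_mod_self_left, Nat.mod_eq_of_lt hr]
      · rw [Nat.add_mul_div_left _ _ (by omega : 0 < q), Nat.div_eq_of_lt hr, zero_add]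
    rw [hudig (r + q * s), hd]
    simp only [List.length_cons]
    rw [Finset.sum_range_succ']
    simp only [List.getD_cons_succ, List.getD_cons_zero, pow_zero, mul_one]
    rw [hudig s, Finset.mul_sum, add_comm]
    congr 1
    exact Finset.sum_congr rfl (fun i _ => by ring)

lemma uinj_aux {q : ℕ} {π : V} {u : ℕ → V} (hq : 2 ≤ q) (hπ : Irreducible π)
    (hmax : IsLocalRing.maximalIdeal V = Ideal.span {π})
    (hu0 : u 0 = 0)
    (hurep : ∀ a : V, ∃! i : ℕ, i < q ∧ a - u i ∈ IsLocalRing.maximalIdeal V)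
    (hudig : ∀ n : ℕ, u n = ∑ i ∈ Finset.range (Nat.digits q n).length,
        u ((Nat.digits q n).getD i 0) * π ^ i) :
    ∀ N m k : ℕ, m + k < N → m ≠ k → u m ≠ u k := by
  intro N
  induction N with
  | zero => omega
  | succ N ih =>
    intro m k hN hmk heq
    have hπm : π ∈ IsLocalRing.maximalIdeal V := by
      rw [hmax]; exact Ideal.mem_span_singleton_self π
    by_cases hsm : m < q ∧ k < q
    · exact udist hurep hsm.1 hsm.2 hmk (by rw [heq, sub_self]; exact Ideal.zero_mem _)
    · have hq0 : 0 < q := by omega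
      have em : u m = u (m % q) + π * u (m / q) := by
        conv_lhs => rw [← Nat.mod_add_div m q]
        exact udigit hq hu0 hudig (Nat.mod_lt m hq0) (m / q)
      have ek : u k = u (k % q) + π * u (k / q) := by
        conv_lhs => rw [← Nat.mod_add_div k q]
        exact udigit hq hu0 hudig (Nat.mod_lt k hq0) (k / q)
      have hmod : m % q = k % q := by
        by_contra hne
        apply udist hurep (Nat.mod_lt m hq0) (Nat.mod_lt k hq0) hne
        have : u (m % q) - u (k % q) = π * (u (k / q) - u (m / q)) := by
          rw [em, ek] at heq; linear_combination heq
        rw [this]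
        exact Ideal.mul_mem_right _ _ hπm
      have hdivu : u (m / q) = u (k / q) := by
        have h2 : π * u (m / q) = π * u (k / q) := by
          rw [em, ek, hmod] at heq
          linear_combination heq
        exact mul_left_cancel₀ hπ.ne_zero h2
      have hdiv : m / q ≠ k / q := by
        intro hd
        apply hmk
        have e1 := Nat.mod_add_div m q
        have e2 := Nat.mod_add_div k q
        rw [← e1, ← e2, hmod, hd]
      have hlt : m / q + k / q < N := by
        rcases not_and_or.mp hsm with h | h
        · push_neg at h
          have h1 : m / q < m := Nat.div_lt_self (by omega) (by omega)
          have h2 : k / q ≤ k := Nat.div_le_self k q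
          omega
        · push_neg at h
          have h1 : k / q < k := Nat.div_lt_self (by omega) (by omega)
          have h2 : m / q ≤ m := Nat.div_le_self m q
          omega
      exact ih (m / q) (k / q) hlt hdiv hdivu

lemma uinj {q : ℕ} {π : V} {u : ℕ → V} (hq : 2 ≤ q) (hπ : Irreducible π)
    (hmax : IsLocalRing.maximalIdeal V = Ideal.span {π})
    (hu0 : u 0 = 0)
    (hurep : ∀ a : V, ∃! i : ℕ, i < q ∧ a - u i ∈ IsLocalRing.maximalIdeal V)
    (hudig : ∀ n : ℕ, u n = ∑ i ∈ Finset.range (Nat.digits q n).length,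
        u ((Nat.digits q n).getD i 0) * π ^ i)
    {m k : ℕ} (hmk : m ≠ k) : u m ≠ u k :=
  uinj_aux hq hπ hmax hu0 hurep hudig (m + k + 1) m k (by omega) hmk

lemma Pf_self_ne_zero {q : ℕ} {π : V} {u : ℕ → V} (hq : 2 ≤ q) (hπ : Irreducible π)
    (hmax : IsLocalRing.maximalIdeal V = Ideal.span {π})
    (hu0 : u 0 = 0)
    (hurep : ∀ a : V, ∃! i : ℕ, i < q ∧ a - u i ∈ IsLocalRing.maximalIdeal V)
    (hudig : ∀ n : ℕ, u n = ∑ i ∈ Finset.range (Nat.digits q n).length,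
        u ((Nat.digits q n).getD i 0) * π ^ i)
    (m : ℕ) : Pf u m m ≠ 0 := by
  apply Finset.prod_ne_zero_iff.mpr
  intro k hk
  rw [Finset.mem_range] at hk
  exact sub_ne_zero_of_ne (uinj hq hπ hmax hu0 hurep hudig (by omega))

lemma F_eq_zero {q : ℕ} {π : V} {u : ℕ → V} {F : ℕ → V → V} (hq : 2 ≤ q) (hπ : Irreducible π)
    (hmax : IsLocalRing.maximalIdeal V = Ideal.span {π})
    (hu0 : u 0 = 0)
    (hurep : ∀ a : V, ∃! i : ℕ, i < q ∧ a - u i ∈ IsLocalRing.maximalIdeal V)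
    (hudig : ∀ n : ℕ, u n = ∑ i ∈ Finset.range (Nat.digits q n).length,
        u ((Nat.digits q n).getD i 0) * π ^ i)
    (hF : ∀ (n : ℕ) (x : V),
        (∏ k ∈ Finset.range n, (u n - u k)) * F n x = ∏ k ∈ Finset.range n, (x - u k))
    {n m : ℕ} (hnm : n < m) : F m (u n) = 0 := by
  have h := hF m (u n)
  have hz : ∏ k ∈ Finset.range m, (u n - u k) = 0 :=
    Finset.prod_eq_zero (Finset.mem_range.mpr hnm) (by rw [sub_self])
  rw [hz] at h
  rcases mul_eq_zero.mp h with h | h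
  · exact absurd h (Pf_self_ne_zero hq hπ hmax hu0 hurep hudig m)
  · exact h

lemma filter_mod_eq {q : ℕ} (hq0 : 0 < q) {c m t : ℕ} (hc : c < q)
    (ht : ∀ k, k % q = c → (k < m ↔ k / q < t)) :
    Finset.filter (fun k => k % q = c) (Finset.range m) =
      (Finset.range t).image (fun s => c + q * s) := by
  ext k
  simp only [Finset.mem_filter, Finset.mem_range, Finset.mem_image]
  constructor
  · rintro ⟨hk, hkc⟩
    exact ⟨k / q, (ht k hkc).1 hk, by rw [← hkc, Nat.mod_add_div]⟩
  · rintro ⟨s, hs, rfl⟩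
    have h1 : (c + q * s) % q = c := by
      rw [Nat.add_mul_mod_self_left, Nat.mod_eq_of_lt hc]
    have h2 : (c + q * s) / q = s := by
      rw [Nat.add_mul_div_left _ _ hq0, Nat.div_eq_of_lt hc, zero_add]
    exact ⟨(ht _ h1).2 (by rw [h2]; exact hs), h1⟩

lemma range_bound_left {q c ℓ s m' : ℕ} (hc : c < q) (hl : ℓ ≤ c) :
    c + q * s < ℓ + q * m' ↔ s < m' := by
  constructor
  · intro h
    by_contra hs
    push_neg at hs
    have : q * m' ≤ q * s := Nat.mul_le_mul_left q hs
    omega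
  · intro h
    have h1 : s + 1 ≤ m' := h
    have : q * (s + 1) ≤ q * m' := Nat.mul_le_mul_left q h1
    have : q * s + q ≤ q * m' := by rw [Nat.mul_succ] at this; omega
    omega

lemma range_bound_right {q c ℓ s m' : ℕ} (hl : ℓ < q) (hc : c < ℓ) :
    c + q * s < ℓ + q * m' ↔ s < m' + 1 := by
  constructor
  · intro h
    by_contra hs
    push_neg at hs
    have : q * (m' + 1) ≤ q * s := Nat.mul_le_mul_left q hs
    rw [Nat.mul_succ] at this
    omega
  · intro h
    have h1 : s ≤ m' := by omega
    have : q * s ≤ q * m' := Nat.mul_le_mul_left q h1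
    omega

/-- decomposition of `Pf u (a + q*b) (ℓ + q*m')` into a "unit part" times
`π ^ t * Pf u b t` where `t = m'` if `ℓ ≤ a` and `t = m' + 1` if `a < ℓ`. -/
lemma Pf_split {q : ℕ} {π : V} {u : ℕ → V} (hq : 2 ≤ q) (hu0 : u 0 = 0)
    (hudig : ∀ n : ℕ, u n = ∑ i ∈ Finset.range (Nat.digits q n).length,
        u ((Nat.digits q n).getD i 0) * π ^ i)
    {a ℓ : ℕ} (ha : a < q) (hl : ℓ < q) (b m' t : ℕ)
    (hcase : (ℓ ≤ a ∧ t = m') ∨ (a < ℓ ∧ t = m' + 1)) :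
    Pf u (a + q * b) (ℓ + q * m') =
      (∏ k ∈ (Finset.range (ℓ + q * m')).filter (fun k => ¬ k % q = a),
        (u (a + q * b) - u k)) * (π ^ t * Pf u b t) := by
  have hq0 : 0 < q := by omega
  have hsplit := Finset.prod_filter_mul_prod_filter_not
    (Finset.range (ℓ + q * m')) (fun k => k % q = a) (fun k => u (a + q * b) - u k)
  have hfil : Finset.filter (fun k => k % q = a) (Finset.range (ℓ + q * m')) =
      (Finset.range t).image (fun s => a + q * s) := by
    apply filter_mod_eq hq0 ha
    intro k hk
    have hk' : k = a + q * (k / q) := by rw [← hk, Nat.mod_add_div]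
    rcases hcase with ⟨h1, rfl⟩ | ⟨h1, rfl⟩
    · constructor
      · intro h; exact (range_bound_left ha h1).1 (by rw [← hk']; exact h)
      · intro h; rw [hk']; exact (range_bound_left ha h1).2 h
    · constructor
      · intro h; exact (range_bound_right hl h1).1 (by rw [← hk']; exact h)
      · intro h; rw [hk']; exact (range_bound_right hl h1).2 h
  have himg : ∏ k ∈ (Finset.range t).image (fun s => a + q * s),
      (u (a + q * b) - u k) = π ^ t * Pf u b t := by
    rw [Finset.prod_image (by intro x _ y _ h; exact Nat.eq_of_mul_eq_mul_left hq0 (by simp only at h; omega))]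
    have : ∀ s : ℕ, u (a + q * b) - u (a + q * s) = π * (u b - u s) := by
      intro s
      rw [udigit hq hu0 hudig ha b, udigit hq hu0 hudig ha s]
      ring
    rw [Finset.prod_congr rfl (fun s _ => this s)]
    rw [Finset.prod_mul_distrib, Finset.prod_const, Finset.card_range]
    rfl
  calc Pf u (a + q * b) (ℓ + q * m')
      = (∏ k ∈ (Finset.range (ℓ + q * m')).filter (fun k => k % q = a),
          (u (a + q * b) - u k)) *
        (∏ k ∈ (Finset.range (ℓ + q * m')).filter (fun k => ¬ k % q = a),
          (u (a + q * b) - u k)) := hsplit.symm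
    _ = _ := by rw [hfil, himg]; ring

lemma prod_mod {M : Type*} [CommMonoid M] {q : ℕ} (v : ℕ → M) {ℓ : ℕ} (hl : ℓ ≤ q) :
    ∀ m' : ℕ, ∏ k ∈ Finset.range (ℓ + q * m'), v (k % q) =
      (∏ k ∈ Finset.range ℓ, v k) * (∏ r ∈ Finset.range q, v r) ^ m' := by
  intro m'
  induction m' with
  | zero =>
    simp only [Nat.mul_zero, Nat.add_zero, pow_zero, mul_one]
    exact Finset.prod_congr rfl (fun k hk => by
      rw [Nat.mod_eq_of_lt (by have := Finset.mem_range.mp hk; omega)])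
  | succ m ih =>
    have he : ℓ + q * (m + 1) = q + (ℓ + q * m) := by ring
    rw [he, Finset.prod_range_add]
    have h1 : ∏ x ∈ Finset.range q, v (x % q) = ∏ r ∈ Finset.range q, v r :=
      Finset.prod_congr rfl (fun k hk => by rw [Nat.mod_eq_of_lt (Finset.mem_range.mp hk)])
    have h2 : ∏ x ∈ Finset.range (ℓ + q * m), v ((q + x) % q) =
        ∏ x ∈ Finset.range (ℓ + q * m), v (x % q) :=
      Finset.prod_congr rfl (fun k _ => by rw [Nat.add_mod_left])
    rw [h1, h2, ih, pow_succ]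
    rw [mul_left_comm, mul_comm ((∏ r ∈ Finset.range q, v r) ^ m)]

lemma rho_unitpart {q : ℕ} {π : V} {u : ℕ → V} (hq : 2 ≤ q) (hu0 : u 0 = 0)
    (hmax : IsLocalRing.maximalIdeal V = Ideal.span {π})
    (hudig : ∀ n : ℕ, u n = ∑ i ∈ Finset.range (Nat.digits q n).length,
        u ((Nat.digits q n).getD i 0) * π ^ i)
    {a ℓ : ℕ} (ha : a < q) (hl : ℓ ≤ q) (b m' : ℕ) :
    IsLocalRing.residue V (∏ k ∈ (Finset.range (ℓ + q * m')).filter (fun k => ¬ k % q = a),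
        (u (a + q * b) - u k)) =
      (∏ k ∈ Finset.range ℓ, (if k = a then 1 else IsLocalRing.residue V (u a - u k))) *
      (∏ r ∈ (Finset.range q).erase a, IsLocalRing.residue V (u a - u r)) ^ m' := by
  classical
  have hπ0 : IsLocalRing.residue V π = 0 :=
    Ideal.Quotient.eq_zero_iff_mem.mpr (hmax ▸ Ideal.mem_span_singleton_self π)
  have hfac : ∀ k : ℕ, IsLocalRing.residue V (u (a + q * b) - u k) =
      IsLocalRing.residue V (u a - u (k % q)) := by
    intro k
    have ek : u k = u (k % q) + π * u (k / q) := by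
      conv_lhs => rw [← Nat.mod_add_div k q]
      exact udigit hq hu0 hudig (Nat.mod_lt k (by omega)) (k / q)
    rw [udigit hq hu0 hudig ha b, ek]
    have he : u a + π * u b - (u (k % q) + π * u (k / q)) =
        (u a - u (k % q)) + π * (u b - u (k / q)) := by ring
    rw [he, map_add, map_mul, hπ0, zero_mul, add_zero]
  rw [map_prod, Finset.prod_congr rfl (fun k _ => hfac k), Finset.prod_filter]
  set v : ℕ → IsLocalRing.ResidueField V :=
    fun r => if r = a then 1 else IsLocalRing.residue V (u a - u r) with hv
  have hveq : ∀ k : ℕ,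
      (if ¬ k % q = a then IsLocalRing.residue V (u a - u (k % q)) else 1) = v (k % q) := by
    intro k; by_cases h : k % q = a <;> simp [hv, h]
  rw [Finset.prod_congr rfl (fun k _ => hveq k), prod_mod v hl m']
  have h3 : ∏ r ∈ Finset.range q, v r = ∏ r ∈ (Finset.range q).erase a, v r :=
    (Finset.prod_erase _ (by simp [hv])).symm
  have h4 : ∏ r ∈ (Finset.range q).erase a, v r =
      ∏ r ∈ (Finset.range q).erase a, IsLocalRing.residue V (u a - u r) :=
    Finset.prod_congr rfl (fun r hr => by rw [hv]; simp [(Finset.mem_erase.mp hr).1])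
  rw [h3, h4]

lemma exists_rep {q : ℕ} {u : ℕ → V}
    (hurep : ∀ a : V, ∃! i : ℕ, i < q ∧ a - u i ∈ IsLocalRing.maximalIdeal V)
    (x : IsLocalRing.ResidueField V) :
    ∃ i, i < q ∧ IsLocalRing.residue V (u i) = x := by
  obtain ⟨a, rfl⟩ := Ideal.Quotient.mk_surjective x
  obtain ⟨i, ⟨hi, hmem⟩, _⟩ := hurep a
  exact ⟨i, hi, (Ideal.Quotient.eq.mpr hmem).symm⟩

lemma rho_u_inj {q : ℕ} {u : ℕ → V}
    (hurep : ∀ a : V, ∃! i : ℕ, i < q ∧ a - u i ∈ IsLocalRing.maximalIdeal V)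
    {i j : ℕ} (hi : i < q) (hj : j < q)
    (h : IsLocalRing.residue V (u i) = IsLocalRing.residue V (u j)) : i = j := by
  by_contra hij
  exact udist hurep hi hj hij (Ideal.Quotient.eq.mp h)

lemma prod_erase_eq_univ {q : ℕ} {u : ℕ → V}
    [Fintype (IsLocalRing.ResidueField V)] [DecidableEq (IsLocalRing.ResidueField V)]
    (hurep : ∀ a : V, ∃! i : ℕ, i < q ∧ a - u i ∈ IsLocalRing.maximalIdeal V)
    {c : ℕ} (hc : c < q) :
    ∏ r ∈ (Finset.range q).erase c, IsLocalRing.residue V (u c - u r) =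
      ∏ y ∈ (Finset.univ.erase (0 : IsLocalRing.ResidueField V)), y := by
  apply Finset.prod_nbij (fun r => IsLocalRing.residue V (u c - u r))
  · intro r hr
    obtain ⟨hrc, hrq⟩ := Finset.mem_erase.mp hr
    exact Finset.mem_erase.mpr
      ⟨rho_u_ne hurep hc (Finset.mem_range.mp hrq) (fun h => hrc h.symm), Finset.mem_univ _⟩
  · intro r1 h1 r2 h2 h
    simp only [Finset.coe_erase, Set.mem_diff, Finset.mem_coe, Finset.mem_range] at h1 h2
    have h' : IsLocalRing.residue V (u c - u r1) = IsLocalRing.residue V (u c - u r2) := h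
    rw [map_sub, map_sub] at h'
    have heq : IsLocalRing.residue V (u r1) = IsLocalRing.residue V (u r2) := by
      linear_combination -h'
    exact rho_u_inj hurep h1.1 h2.1 heq
  · intro y hy
    simp only [Finset.coe_erase, Set.mem_diff, Finset.mem_coe, Finset.mem_univ,
      Set.mem_singleton_iff, true_and] at hy
    obtain ⟨r, hr, hru⟩ := exists_rep hurep (IsLocalRing.residue V (u c) - y)
    refine ⟨r, ?_, ?_⟩
    · have hrc : r ≠ c := by
        intro h; subst h
        exact hy (by linear_combination hru)
      simp only [Finset.coe_erase, Set.mem_diff, Finset.mem_coe, Finset.mem_range,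
        Set.mem_singleton_iff]
      exact ⟨hr, hrc⟩
    · show IsLocalRing.residue V (u c - u r) = y
      rw [map_sub, hru]; ring
  · intro r _; rfl

lemma single_digit {q : ℕ} {π : V} {u : ℕ → V} {F : ℕ → V → V}
    [Fintype (IsLocalRing.ResidueField V)] [DecidableEq (IsLocalRing.ResidueField V)]
    (hq : 2 ≤ q) (hπ : Irreducible π)
    (hmax : IsLocalRing.maximalIdeal V = Ideal.span {π})
    (hu0 : u 0 = 0)
    (hurep : ∀ a : V, ∃! i : ℕ, i < q ∧ a - u i ∈ IsLocalRing.maximalIdeal V)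
    (hudig : ∀ n : ℕ, u n = ∑ i ∈ Finset.range (Nat.digits q n).length,
        u ((Nat.digits q n).getD i 0) * π ^ i)
    (hF : ∀ (n : ℕ) (x : V),
        (∏ k ∈ Finset.range n, (u n - u k)) * F n x = ∏ k ∈ Finset.range n, (x - u k))
    {a ℓ : ℕ} (ha : a < q) (hl : ℓ < q) (b m' : ℕ) :
    IsLocalRing.residue V (F (ℓ + q * m') (u (a + q * b))) =
      IsLocalRing.residue V (F ℓ (u a)) * IsLocalRing.residue V (F m' (u b)) := by
  have hπ0 : IsLocalRing.residue V π = 0 :=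
    Ideal.Quotient.eq_zero_iff_mem.mpr (hmax ▸ Ideal.mem_span_singleton_self π)
  set ρ := IsLocalRing.residue V with hρ
  set m := ℓ + q * m' with hm
  set n := a + q * b with hn
  set A := ∏ k ∈ (Finset.range m).filter (fun k => ¬ k % q = a), (u n - u k) with hA
  set B := ∏ k ∈ (Finset.range m).filter (fun k => ¬ k % q = ℓ), (u m - u k) with hB
  have hFm : Pf u m m * F m (u n) = Pf u n m := hF m (u n)
  have eB : Pf u m m = B * (π ^ m' * Pf u m' m') :=
    Pf_split hq hu0 hudig hl hl m' m' m' (Or.inl ⟨le_refl ℓ, rfl⟩)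
  have hρB : ρ B = ρ (Pf u ℓ ℓ) *
      (∏ r ∈ (Finset.range q).erase ℓ, ρ (u ℓ - u r)) ^ m' := by
    rw [hB, rho_unitpart hq hu0 hmax hudig hl (le_of_lt hl) m' m']
    congr 1
    rw [Pf, map_prod]
    exact Finset.prod_congr rfl (fun k hk => by
      rw [if_neg (by have := Finset.mem_range.mp hk; omega)])
  have hρPfll : ρ (Pf u ℓ ℓ) ≠ 0 := by
    rw [Pf, map_prod]
    apply Finset.prod_ne_zero_iff.mpr
    intro k hk
    have hk' := Finset.mem_range.mp hk
    exact rho_u_ne hurep hl (by omega) (by omega)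
  have hPlne : (∏ r ∈ (Finset.range q).erase ℓ, ρ (u ℓ - u r)) ≠ 0 := by
    apply Finset.prod_ne_zero_iff.mpr
    intro r hr
    obtain ⟨hrl, hrq⟩ := Finset.mem_erase.mp hr
    exact rho_u_ne hurep hl (Finset.mem_range.mp hrq) (fun h => hrl h.symm)
  have hρBne : ρ B ≠ 0 := by
    rw [hρB]; exact mul_ne_zero hρPfll (pow_ne_zero _ hPlne)
  have hPmne : Pf u m' m' ≠ 0 := Pf_self_ne_zero hq hπ hmax hu0 hurep hudig m'
  have hnz : π ^ m' * Pf u m' m' ≠ 0 := mul_ne_zero (pow_ne_zero _ hπ.ne_zero) hPmne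
  by_cases hle : ℓ ≤ a
  · -- no carry case
    have eA : Pf u n m = A * (π ^ m' * Pf u b m') :=
      Pf_split hq hu0 hudig ha hl b m' m' (Or.inl ⟨hle, rfl⟩)
    have key : B * F m (u n) = A * F m' (u b) := by
      apply mul_left_cancel₀ hnz
      calc (π ^ m' * Pf u m' m') * (B * F m (u n))
          = (B * (π ^ m' * Pf u m' m')) * F m (u n) := by ring
        _ = Pf u m m * F m (u n) := by rw [← eB]
        _ = Pf u n m := hFm
        _ = A * (π ^ m' * Pf u b m') := eA
        _ = A * (π ^ m' * (Pf u m' m' * F m' (u b))) := by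
            rw [show Pf u m' m' * F m' (u b) = Pf u b m' from hF m' (u b)]
        _ = (π ^ m' * Pf u m' m') * (A * F m' (u b)) := by ring
    have hρA : ρ A = ρ (Pf u a ℓ) *
        (∏ r ∈ (Finset.range q).erase a, ρ (u a - u r)) ^ m' := by
      rw [hA, rho_unitpart hq hu0 hmax hudig ha (le_of_lt hl) b m']
      congr 1
      rw [Pf, map_prod]
      exact Finset.prod_congr rfl (fun k hk => by
        rw [if_neg (by have := Finset.mem_range.mp hk; omega)])
    have hPaPl : (∏ r ∈ (Finset.range q).erase a, ρ (u a - u r)) =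
        ∏ r ∈ (Finset.range q).erase ℓ, ρ (u ℓ - u r) :=
      (prod_erase_eq_univ hurep ha).trans (prod_erase_eq_univ hurep hl).symm
    have hFla : ρ (Pf u a ℓ) = ρ (Pf u ℓ ℓ) * ρ (F ℓ (u a)) := by
      rw [← map_mul]
      congr 1
      exact (hF ℓ (u a)).symm
    have hkey : ρ B * ρ (F m (u n)) = ρ A * ρ (F m' (u b)) := by
      rw [← map_mul, ← map_mul, key]
    apply mul_left_cancel₀ hρBne
    calc ρ B * ρ (F m (u n)) = ρ A * ρ (F m' (u b)) := hkey
      _ = (ρ (Pf u a ℓ) * (∏ r ∈ (Finset.range q).erase a, ρ (u a - u r)) ^ m') *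
            ρ (F m' (u b)) := by rw [hρA]
      _ = (ρ (Pf u ℓ ℓ) * ρ (F ℓ (u a)) *
            (∏ r ∈ (Finset.range q).erase ℓ, ρ (u ℓ - u r)) ^ m') * ρ (F m' (u b)) := by
          rw [hFla, hPaPl]
      _ = ρ B * (ρ (F ℓ (u a)) * ρ (F m' (u b))) := by rw [hρB]; ring
  · -- carry case
    push_neg at hle
    have eA : Pf u n m = A * (π ^ (m' + 1) * Pf u b (m' + 1)) :=
      Pf_split hq hu0 hudig ha hl b m' (m' + 1) (Or.inr ⟨hle, rfl⟩)
    have e4 : Pf u b (m' + 1) = Pf u (m' + 1) (m' + 1) * F (m' + 1) (u b) :=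
      (hF (m' + 1) (u b)).symm
    have e5 : Pf u (m' + 1) (m' + 1) = Pf u (m' + 1) m' * (u (m' + 1) - u m') :=
      Finset.prod_range_succ _ m'
    have e6 : Pf u (m' + 1) m' = Pf u m' m' * F m' (u (m' + 1)) :=
      (hF m' (u (m' + 1))).symm
    have key : B * F m (u n) =
        π * (A * ((u (m' + 1) - u m') * (F m' (u (m' + 1)) * F (m' + 1) (u b)))) := by
      apply mul_left_cancel₀ hnz
      calc (π ^ m' * Pf u m' m') * (B * F m (u n))
          = (B * (π ^ m' * Pf u m' m')) * F m (u n) := by ring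
        _ = Pf u m m * F m (u n) := by rw [← eB]
        _ = Pf u n m := hFm
        _ = A * (π ^ (m' + 1) * Pf u b (m' + 1)) := eA
        _ = A * (π ^ (m' + 1) * (Pf u m' m' * F m' (u (m' + 1)) * (u (m' + 1) - u m') *
              F (m' + 1) (u b))) := by rw [e4, e5, e6]
        _ = (π ^ m' * Pf u m' m') * (π * (A * ((u (m' + 1) - u m') *
              (F m' (u (m' + 1)) * F (m' + 1) (u b))))) := by ring
    have hρ0 : ρ (F m (u n)) = 0 := by
      have h2 : ρ B * ρ (F m (u n)) = ρ π * ρ (A * ((u (m' + 1) - u m') *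
          (F m' (u (m' + 1)) * F (m' + 1) (u b)))) := by
        rw [← map_mul, key, map_mul]
      rw [hπ0, zero_mul] at h2
      exact (mul_eq_zero.mp h2).resolve_left hρBne
    rw [hρ0]
    have hFl0 : F ℓ (u a) = 0 :=
      F_eq_zero hq hπ hmax hu0 hurep hudig hF hle
    rw [hFl0, map_zero, zero_mul]

lemma lucas {q : ℕ} {π : V} {u : ℕ → V} {F : ℕ → V → V}
    [Fintype (IsLocalRing.ResidueField V)] [DecidableEq (IsLocalRing.ResidueField V)]
    (hq : 2 ≤ q) (hπ : Irreducible π)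
    (hmax : IsLocalRing.maximalIdeal V = Ideal.span {π})
    (hu0 : u 0 = 0)
    (hurep : ∀ a : V, ∃! i : ℕ, i < q ∧ a - u i ∈ IsLocalRing.maximalIdeal V)
    (hudig : ∀ n : ℕ, u n = ∑ i ∈ Finset.range (Nat.digits q n).length,
        u ((Nat.digits q n).getD i 0) * π ^ i)
    (hF0 : ∀ x : V, F 0 x = 1)
    (hF : ∀ (n : ℕ) (x : V),
        (∏ k ∈ Finset.range n, (u n - u k)) * F n x = ∏ k ∈ Finset.range n, (x - u k)) :
    ∀ (γ : List ℕ), (∀ d ∈ γ, d < q) → ∀ b m : ℕ,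
    IsLocalRing.residue V (F m (u (Nat.ofDigits q γ + q ^ γ.length * b))) =
      IsLocalRing.residue V (F (m % q ^ γ.length) (u (Nat.ofDigits q γ))) *
      IsLocalRing.residue V (F (m / q ^ γ.length) (u b)) := by
  intro γ
  induction γ with
  | nil =>
    intro _ b m
    simp only [Nat.ofDigits_nil, List.length_nil, pow_zero, one_mul, zero_add,
      Nat.mod_one, Nat.div_one]
    rw [hF0, map_one, one_mul]
  | cons a γ ih =>
    intro hval b m
    have ha : a < q := hval a (List.mem_cons_self (a := a) (l := γ))
    have hγ : ∀ x ∈ γ, x < q := fun x hx => hval x (List.mem_cons_of_mem a hx)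
    have hq0 : 0 < q := by omega
    set d := γ.length with hd
    set A' := Nat.ofDigits q γ with hA'
    have hn : Nat.ofDigits q (a :: γ) + q ^ (List.length (a :: γ)) * b =
        a + q * (A' + q ^ d * b) := by
      rw [Nat.ofDigits_cons, List.length_cons, pow_succ']
      ring
    have hco : Nat.ofDigits q (a :: γ) = a + q * A' := Nat.ofDigits_cons
    have h1 : IsLocalRing.residue V (F m (u (a + q * (A' + q ^ d * b)))) =
        IsLocalRing.residue V (F (m % q) (u a)) *
        IsLocalRing.residue V (F (m / q) (u (A' + q ^ d * b))) := by
      conv_lhs => rw [← Nat.mod_add_div m q]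
      exact single_digit hq hπ hmax hu0 hurep hudig hF ha (Nat.mod_lt m hq0) _ _
    have h2 := ih hγ b (m / q)
    have hmod1 : m % q ^ (d + 1) % q = m % q :=
      Nat.mod_mod_of_dvd m (dvd_pow_self q (Nat.succ_ne_zero d))
    have hmod2 : m % q ^ (d + 1) / q = m / q % q ^ d := by
      rw [pow_succ']
      exact Nat.mod_mul_right_div_self m q (q ^ d)
    have hdiv : m / q ^ (d + 1) = m / q / q ^ d := by
      rw [Nat.div_div_eq_div_mul, pow_succ']
    have h3 : IsLocalRing.residue V (F (m % q ^ (d + 1)) (u (a + q * A'))) =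
        IsLocalRing.residue V (F (m % q) (u a)) *
        IsLocalRing.residue V (F (m / q % q ^ d) (u A')) := by
      conv_lhs => rw [← Nat.mod_add_div (m % q ^ (d + 1)) q]
      rw [hmod1, hmod2]
      exact single_digit hq hπ hmax hu0 hurep hudig hF ha (Nat.mod_lt _ hq0) _ _
    rw [hn, hco, List.length_cons, h1, h2, h3, hdiv]
    ring

lemma ofDigits_intCast (q : ℕ) (l : List ℕ) :
    Nat.ofDigits (q : ℤ) l = ((Nat.ofDigits q l : ℕ) : ℤ) := by
  induction l with
  | nil => simp [Nat.ofDigits]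
  | cons a l ih =>
    show (a : ℤ) + (q : ℤ) * Nat.ofDigits (q : ℤ) l = ((a + q * Nat.ofDigits q l : ℕ) : ℤ)
    rw [ih]; push_cast; ring

end MainAux

/-- Main lemma: with `g` a primitive root modulo `𝔪` and
`S j α = { m : 0 ≤ m ≤ z α, F m (u (z α)) ≡ g ^ j mod 𝔪 }`, for any tuples `α, β` over
the representatives and any `n ∈ ℤ`, the map `(ℓ, m) ↦ ℓ + q ^ (deg α) * m` is a
bijection from `⋃_{j=0}^{q-2} S j α × S (n - j) β` onto `S n (α∙β)`. -/
theorem main_lemma_bijection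
    (V : Type*) [CommRing V] [IsDomain V] [IsDiscreteValuationRing V]
    (q : ℕ) (hq : 2 ≤ q)
    (π : V) (hπ : Irreducible π)
    (hmax : IsLocalRing.maximalIdeal V = Ideal.span {π})
    (u : ℕ → V) (hu0 : u 0 = 0)
    (hurep : ∀ a : V, ∃! i : ℕ, i < q ∧ a - u i ∈ IsLocalRing.maximalIdeal V)
    (hudig : ∀ n : ℕ, u n = ∑ i ∈ Finset.range (Nat.digits q n).length,
        u ((Nat.digits q n).getD i 0) * π ^ i)
    (F : ℕ → V → V) (hF0 : ∀ x : V, F 0 x = 1)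
    (hF : ∀ (n : ℕ) (x : V),
        (∏ k ∈ Finset.range n, (u n - u k)) * F n x = ∏ k ∈ Finset.range n, (x - u k))
    (g : V) (hg : g ∉ IsLocalRing.maximalIdeal V)
    (hgen : ∀ a : V, a ∉ IsLocalRing.maximalIdeal V →
        ∃ j : ℕ, IsLocalRing.residue V a = IsLocalRing.residue V g ^ j)
    (S : ℤ → List ℕ → Set ℤ)
    (hS : ∀ (j : ℤ) (α : List ℕ), S j α =
        {m : ℤ | 0 ≤ m ∧ m ≤ (Nat.ofDigits q α : ℤ) ∧
          IsLocalRing.residue V (F m.toNat (u ((Nat.ofDigits q α : ℕ)))) =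
            IsLocalRing.residue V g ^ j})
    (α β : List ℕ) (hα : ∀ d ∈ α, d < q) (hβ : ∀ d ∈ β, d < q)
    (hαne : α ≠ []) (hβne : β ≠ []) (n : ℤ) :
    Set.BijOn (fun p : ℤ × ℤ => p.1 + (q : ℤ) ^ α.length * p.2)
      (⋃ j ∈ Finset.range (q - 1), (S (j : ℤ) α) ×ˢ (S (n - (j : ℤ)) β))
      (S n (α ++ β)) := by
  classical
  letI : DecidableEq (IsLocalRing.ResidueField V) := Classical.decEq _
  have hbij : Function.Bijective
      (fun i : Fin q => IsLocalRing.residue V (u i)) := by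
    constructor
    · intro i j h
      exact Fin.ext (MainAux.rho_u_inj hurep i.2 j.2 h)
    · intro x
      obtain ⟨i, hi, h⟩ := MainAux.exists_rep hurep x
      exact ⟨⟨i, hi⟩, h⟩
  letI : Fintype (IsLocalRing.ResidueField V) := Fintype.ofBijective _ hbij
  have hcard : Fintype.card (IsLocalRing.ResidueField V) = q := by
    rw [← Fintype.card_of_bijective hbij, Fintype.card_fin]
  have hgne : IsLocalRing.residue V g ≠ 0 :=
    fun h => hg (Ideal.Quotient.eq_zero_iff_mem.mp h)
  have hgpow : IsLocalRing.residue V g ^ (q - 1) = 1 := by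
    have := FiniteField.pow_card_sub_one_eq_one (IsLocalRing.residue V g) hgne
    rwa [hcard] at this
  set d := α.length with hd
  set A := Nat.ofDigits q α with hA
  set Bv := Nat.ofDigits q β with hBv
  have hAlt : A < q ^ d := Nat.ofDigits_lt_base_pow_length (by omega) hα
  have hN : Nat.ofDigits q (α ++ β) = A + q ^ d * Bv := Nat.ofDigits_append
  have lucasAB : ∀ m : ℕ, IsLocalRing.residue V (F m (u (Nat.ofDigits q (α ++ β)))) =
      IsLocalRing.residue V (F (m % q ^ d) (u A)) *
      IsLocalRing.residue V (F (m / q ^ d) (u Bv)) := by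
    intro m
    rw [hN]
    exact MainAux.lucas hq hπ hmax hu0 hurep hudig hF0 hF α hα Bv m
  have hqd0 : (0:ℤ) < (q:ℤ) ^ d := by positivity
  have hAc : Nat.ofDigits (q:ℤ) α = ((A : ℕ) : ℤ) := MainAux.ofDigits_intCast q α
  have hBc : Nat.ofDigits (q:ℤ) β = ((Bv : ℕ) : ℤ) := MainAux.ofDigits_intCast q β
  have hNc : Nat.ofDigits (q:ℤ) (α ++ β) = ((Nat.ofDigits q (α ++ β) : ℕ) : ℤ) :=
    MainAux.ofDigits_intCast q (α ++ β)
  have hAz : (A : ℤ) < (q:ℤ) ^ d := by exact_mod_cast hAlt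
  constructor
  · -- MapsTo
    intro p hp
    simp only [Set.mem_iUnion, exists_prop] at hp
    obtain ⟨j, hj, hp1, hp2⟩ := hp
    rw [hS] at hp1 hp2
    obtain ⟨h10, h11, h1r⟩ := hp1
    obtain ⟨h20, h21, h2r⟩ := hp2
    rw [hAc] at h11
    rw [hBc] at h21
    rw [hS]
    have hp1n : ((p.1.toNat : ℤ)) = p.1 := Int.toNat_of_nonneg h10
    have hp2n : ((p.2.toNat : ℤ)) = p.2 := Int.toNat_of_nonneg h20
    have hl1 : p.1.toNat ≤ A := by omega
    have hl1' : p.1.toNat < q ^ d := lt_of_le_of_lt hl1 hAlt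
    refine ⟨add_nonneg h10 (mul_nonneg (by positivity) h20), ?_, ?_⟩
    · rw [hNc]
      have : ((Nat.ofDigits q (α ++ β) : ℕ) : ℤ) = (A : ℤ) + (q:ℤ) ^ d * (Bv : ℤ) := by
        rw [hN]; push_cast; ring
      rw [this]
      exact add_le_add h11 (mul_le_mul_of_nonneg_left h21 (by positivity))
    · have htn : (p.1 + (q:ℤ) ^ d * p.2).toNat = p.1.toNat + q ^ d * p.2.toNat := by
        have : ((p.1.toNat + q ^ d * p.2.toNat : ℕ) : ℤ) = p.1 + (q:ℤ) ^ d * p.2 := by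
          push_cast [hp1n, hp2n]; ring
        omega
      rw [htn, lucasAB]
      have hmod : (p.1.toNat + q ^ d * p.2.toNat) % q ^ d = p.1.toNat := by
        rw [Nat.add_mul_mod_self_left, Nat.mod_eq_of_lt hl1']
      have hdiv : (p.1.toNat + q ^ d * p.2.toNat) / q ^ d = p.2.toNat := by
        rw [Nat.add_mul_div_left _ _ (by positivity), Nat.div_eq_of_lt hl1', zero_add]
      rw [hmod, hdiv, h1r, h2r, ← zpow_add₀ hgne]
      congr 1
      ring
  constructor
  · -- InjOn
    intro p hp p' hp' heq
    simp only [Set.mem_iUnion, exists_prop] at hp hp'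
    obtain ⟨j, hj, hp1, hp2⟩ := hp
    obtain ⟨j', hj', hp1', hp2'⟩ := hp'
    rw [hS] at hp1 hp2 hp1' hp2'
    simp only at heq
    have hb1 : 0 ≤ p.1 ∧ p.1 < (q:ℤ) ^ d :=
      ⟨hp1.1, lt_of_le_of_lt (by rw [← hAc]; exact hp1.2.1) hAz⟩
    have hb1' : 0 ≤ p'.1 ∧ p'.1 < (q:ℤ) ^ d :=
      ⟨hp1'.1, lt_of_le_of_lt (by rw [← hAc]; exact hp1'.2.1) hAz⟩
    have h1 : p.1 = p'.1 := by
      have e1 : (p.1 + (q:ℤ) ^ d * p.2) % (q:ℤ) ^ d = p.1 := by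
        rw [Int.add_mul_emod_self_left, Int.emod_eq_of_lt hb1.1 hb1.2]
      have e2 : (p'.1 + (q:ℤ) ^ d * p'.2) % (q:ℤ) ^ d = p'.1 := by
        rw [Int.add_mul_emod_self_left, Int.emod_eq_of_lt hb1'.1 hb1'.2]
      rw [← e1, ← e2, heq]
    have h2 : p.2 = p'.2 := by
      have := heq
      rw [h1] at this
      have h3 : (q:ℤ) ^ d * p.2 = (q:ℤ) ^ d * p'.2 := by omega
      exact mul_left_cancel₀ (ne_of_gt hqd0) h3
    exact Prod.ext h1 h2
  · -- SurjOn
    intro m hm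
    rw [hS] at hm
    obtain ⟨hm0, hm1, hres⟩ := hm
    set M := m.toNat with hM
    have hMz : ((M : ℕ) : ℤ) = m := Int.toNat_of_nonneg hm0
    set l := M % q ^ d with hldef
    set m' := M / q ^ d with hm'def
    have hluc : IsLocalRing.residue V (F M (u (Nat.ofDigits q (α ++ β)))) =
        IsLocalRing.residue V (F l (u A)) * IsLocalRing.residue V (F m' (u Bv)) :=
      lucasAB M
    have hgn : IsLocalRing.residue V g ^ n ≠ 0 := zpow_ne_zero n hgne
    have hprod : IsLocalRing.residue V (F l (u A)) *
        IsLocalRing.residue V (F m' (u Bv)) ≠ 0 := by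
      rw [← hluc, hres]; exact hgn
    have hne1 : IsLocalRing.residue V (F l (u A)) ≠ 0 := left_ne_zero_of_mul hprod
    have hne2 : IsLocalRing.residue V (F m' (u Bv)) ≠ 0 := right_ne_zero_of_mul hprod
    have hlA : l ≤ A := by
      by_contra h
      push_neg at h
      exact hne1 (by rw [MainAux.F_eq_zero hq hπ hmax hu0 hurep hudig hF h, map_zero])
    have hm'B : m' ≤ Bv := by
      by_contra h
      push_neg at h
      exact hne2 (by rw [MainAux.F_eq_zero hq hπ hmax hu0 hurep hudig hF h, map_zero])
    obtain ⟨j₀, hj₀⟩ := hgen (F l (u A))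
      (fun hmem => hne1 (Ideal.Quotient.eq_zero_iff_mem.mpr hmem))
    have hq1 : 0 < q - 1 := by omega
    set j := j₀ % (q - 1) with hjdef
    have hjpow : IsLocalRing.residue V g ^ j₀ = IsLocalRing.residue V g ^ j := by
      conv_lhs => rw [← Nat.div_add_mod j₀ (q - 1)]
      rw [pow_add, pow_mul, hgpow, one_pow, one_mul]
    have hj1 : IsLocalRing.residue V (F l (u A)) =
        IsLocalRing.residue V g ^ ((j : ℕ) : ℤ) := by
      rw [hj₀, hjpow, zpow_natCast]
    have hj2 : IsLocalRing.residue V (F m' (u Bv)) =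
        IsLocalRing.residue V g ^ (n - (j : ℤ)) := by
      have hmul : IsLocalRing.residue V g ^ ((j : ℕ) : ℤ) *
          IsLocalRing.residue V (F m' (u Bv)) = IsLocalRing.residue V g ^ n := by
        rw [← hj1, ← hluc, hres]
      rw [zpow_sub₀ hgne, eq_div_iff (zpow_ne_zero _ hgne), mul_comm]
      exact hmul
    refine ⟨((l : ℤ), (m' : ℤ)), ?_, ?_⟩
    · simp only [Set.mem_iUnion, exists_prop]
      refine ⟨j, Finset.mem_range.mpr (Nat.mod_lt _ hq1), ?_, ?_⟩
      · rw [hS]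
        refine ⟨by simp, ?_, ?_⟩
        · show (l : ℤ) ≤ Nat.ofDigits (q:ℤ) α
          rw [hAc]
          exact_mod_cast hlA
        · simpa using hj1
      · rw [hS]
        refine ⟨by simp, ?_, ?_⟩
        · show (m' : ℤ) ≤ Nat.ofDigits (q:ℤ) β
          rw [hBc]
          exact_mod_cast hm'B
        · simpa using hj2
    · show (l : ℤ) + (q:ℤ) ^ d * (m' : ℤ) = m
      have : ((l + q ^ d * m' : ℕ) : ℤ) = (l : ℤ) + (q:ℤ) ^ d * (m' : ℤ) := by push_cast; ring
      rw [← this, hldef, hm'def, Nat.mod_add_div, hMz]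
end

section
/- With the notation of the previous statement, for any tuples α, β over R and any n ∈ ℤ: card(S_n(α∙β)) = Σ_{j=0}^{q−2} card(S_j(α)) · card(S_{n−j}(β)). -/
set_option linter.unusedSectionVars false

open Finset IsLocalRing

section CardSAux

variable {V : Type*} [CommRing V] [IsDomain V] [IsDiscreteValuationRing V]
variable {q : ℕ} {π : V} {u : ℕ → V}

lemma csc_mem_iff (hmax : maximalIdeal V = Ideal.span {π}) (x : V) :
    x ∈ maximalIdeal V ↔ π ∣ x := by rw [hmax, Ideal.mem_span_singleton]

lemma csc_isUnit_iff (x : V) : IsUnit x ↔ x ∉ maximalIdeal V := by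
  simp [IsLocalRing.mem_maximalIdeal, mem_nonunits_iff, not_not]

lemma csc_res_zero (x : V) : residue V x = 0 ↔ x ∈ maximalIdeal V :=
  Ideal.Quotient.eq_zero_iff_mem

lemma csc_unit_add_mem {a b : V} (ha : IsUnit a) (hb : b ∈ maximalIdeal V) :
    IsUnit (a + b) := by
  rw [csc_isUnit_iff]
  intro h
  have : a ∈ maximalIdeal V := by
    have := Ideal.sub_mem _ h hb
    simpa using this
  exact ((csc_isUnit_iff a).mp ha) this

lemma csc_pi_mem (hmax : maximalIdeal V = Ideal.span {π}) : π ∈ maximalIdeal V := by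
  rw [csc_mem_iff hmax]

/-- base split: `u (d + q * t) = u d + π * u t` for `d < q`. -/
lemma csc_u_base (hq : 2 ≤ q) (hu0 : u 0 = 0)
    (hudig : ∀ n : ℕ, u n = ∑ i ∈ Finset.range (Nat.digits q n).length,
        u ((Nat.digits q n).getD i 0) * π ^ i)
    {d : ℕ} (hd : d < q) (t : ℕ) : u (d + q * t) = u d + π * u t := by
  rcases Nat.eq_zero_or_pos (d + q * t) with h0 | hpos
  · obtain ⟨hd0, ht0⟩ : d = 0 ∧ q * t = 0 := by omega
    have ht0' : t = 0 := by
      rcases Nat.mul_eq_zero.mp ht0 with h | h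
      · omega
      · exact h
    simp [hd0, ht0', hu0]
  · have hdig : Nat.digits q (d + q * t) = d :: Nat.digits q t := by
      rw [Nat.digits_def' (by omega : 1 < q) hpos]
      congr 1
      · rw [Nat.add_mul_mod_self_left, Nat.mod_eq_of_lt hd]
      · congr 1
        rw [Nat.add_mul_div_left _ _ (by omega : 0 < q), Nat.div_eq_of_lt hd]
        omega
    rw [hudig (d + q * t), hdig]
    simp only [List.length_cons]
    rw [Finset.sum_range_succ']
    simp only [List.getD_cons_succ, List.getD_cons_zero, pow_zero, mul_one, pow_succ]
    rw [hudig t]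
    rw [Finset.mul_sum]
    ring_nf
    rw [add_comm]
    congr 1
    apply Finset.sum_congr rfl
    intro i _
    ring

/-- `u (k0 + q^L * k1) = u k0 + π^L * u k1` for `k0 < q^L`. -/
lemma csc_u_split (hq : 2 ≤ q) (hu0 : u 0 = 0)
    (hudig : ∀ n : ℕ, u n = ∑ i ∈ Finset.range (Nat.digits q n).length,
        u ((Nat.digits q n).getD i 0) * π ^ i) :
    ∀ (L k0 k1 : ℕ), k0 < q ^ L → u (k0 + q ^ L * k1) = u k0 + π ^ L * u k1 := by
  intro L
  induction L with
  | zero =>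
    intro k0 k1 hk0
    have hz : k0 = 0 := by simpa using hk0
    subst hz; simp [hu0]
  | succ L ih =>
    intro k0 k1 hk0
    have hd : k0 % q < q := Nat.mod_lt _ (by omega)
    have hk0' : k0 / q < q ^ L := by
      rw [Nat.div_lt_iff_lt_mul (by omega : 0 < q)]
      calc k0 < q ^ (L + 1) := hk0
      _ = q ^ L * q := by ring
    have e1 : k0 + q ^ (L + 1) * k1 = k0 % q + q * (k0 / q + q ^ L * k1) := by
      have := Nat.mod_add_div k0 q
      ring_nf
      omega
    have e2 : u k0 = u (k0 % q) + π * u (k0 / q) := by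
      have h := csc_u_base hq hu0 hudig hd (k0 / q)
      rwa [Nat.mod_add_div] at h
    rw [e1, csc_u_base hq hu0 hudig hd, ih _ _ hk0', e2]
    ring

variable {V : Type*} [CommRing V] [IsDomain V] [IsDiscreteValuationRing V]
variable {q : ℕ} {π : V} {u : ℕ → V}

/-- units among representative differences -/
lemma csc_udiff_unit (hurep : ∀ a : V, ∃! i : ℕ, i < q ∧ a - u i ∈ maximalIdeal V)
    {d e : ℕ} (hd : d < q) (he : e < q) (hne : d ≠ e) : IsUnit (u d - u e) := by
  obtain ⟨i, _, huniq⟩ := hurep (u d)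
  have h1 : d = i := huniq d ⟨hd, by rw [sub_self]; exact Ideal.zero_mem _⟩
  rw [csc_isUnit_iff]
  intro hmem
  exact hne (h1.trans (huniq e ⟨he, hmem⟩).symm)

/-- the first index where base-q expansions of `n` and `k` differ -/
def nuQ (q n k : ℕ) : ℕ :=
  ((Finset.Icc 1 (n + k)).filter (fun i => n % q ^ i = k % q ^ i)).card

lemma csc_modsplit (hq : 2 ≤ q) (n k i : ℕ) :
    (n % q ^ (i + 1) = k % q ^ (i + 1)) ↔
      (n % q = k % q ∧ (n / q) % q ^ i = (k / q) % q ^ i) := by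
  have hq0 : 0 < q := by omega
  have h1 : n % q ^ (i+1) = n % q + q * (n / q % q ^ i) := by
    rw [pow_succ, mul_comm (q ^ i) q]; exact Nat.mod_mul
  have h2 : k % q ^ (i+1) = k % q + q * (k / q % q ^ i) := by
    rw [pow_succ, mul_comm (q ^ i) q]; exact Nat.mod_mul
  rw [h1, h2]
  constructor
  · intro h
    have e0 : n % q = k % q := by
      have h' := congrArg (· % q) h
      simpa [Nat.add_mul_mod_self_left, Nat.mod_eq_of_lt (Nat.mod_lt n hq0),
        Nat.mod_eq_of_lt (Nat.mod_lt k hq0)] using h'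
    have e1 : q * (n / q % q ^ i) = q * (k / q % q ^ i) := by omega
    exact ⟨e0, Nat.eq_of_mul_eq_mul_left hq0 e1⟩
  · rintro ⟨e1, e2⟩; rw [e1, e2]

/-- main structural lemma for `u`-differences: unit part with exact `π`-adic order. -/
lemma csc_ufact (hq : 2 ≤ q) (hπ : Irreducible π)
    (hmax : maximalIdeal V = Ideal.span {π}) (hu0 : u 0 = 0)
    (hurep : ∀ a : V, ∃! i : ℕ, i < q ∧ a - u i ∈ maximalIdeal V)
    (hudig : ∀ n : ℕ, u n = ∑ i ∈ Finset.range (Nat.digits q n).length,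
        u ((Nat.digits q n).getD i 0) * π ^ i) :
    ∀ n k : ℕ, n ≠ k → ∃ (e : ℕ) (w : V), IsUnit w ∧ u n - u k = π ^ e * w ∧
      (∀ i : ℕ, n % q ^ i = k % q ^ i ↔ i ≤ e) := by
  have key : ∀ N n k : ℕ, n + k ≤ N → n ≠ k →
      ∃ (e : ℕ) (w : V), IsUnit w ∧ u n - u k = π ^ e * w ∧
      (∀ i : ℕ, n % q ^ i = k % q ^ i ↔ i ≤ e) := by
    intro N
    induction N with
    | zero => intro n k h hne; omega
    | succ N ih =>
      intro n k hNk hne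
      have hsplit_n : u n = u (n % q) + π * u (n / q) := by
        have h := csc_u_base hq hu0 hudig (Nat.mod_lt n (by omega)) (n / q)
        rwa [Nat.mod_add_div] at h
      have hsplit_k : u k = u (k % q) + π * u (k / q) := by
        have h := csc_u_base hq hu0 hudig (Nat.mod_lt k (by omega)) (k / q)
        rwa [Nat.mod_add_div] at h
      by_cases hd : n % q = k % q
      · -- recurse
        have hne' : n / q ≠ k / q := by
          intro h; apply hne
          have h1 := Nat.mod_add_div n q
          have h2 := Nat.mod_add_div k q
          rw [h] at h1
          omega
        have hlt : n / q + k / q ≤ N := by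
          have h1 : n / q ≤ n / 2 := Nat.div_le_div_left hq (by omega)
          have h2 : k / q ≤ k / 2 := Nat.div_le_div_left hq (by omega)
          have : 2 ≤ n + k := by
            rcases Nat.lt_or_ge n q with h | h
            · rcases Nat.lt_or_ge k q with h' | h'
              · exfalso; apply hne
                have : n % q = n := Nat.mod_eq_of_lt h
                have : k % q = k := Nat.mod_eq_of_lt h'
                omega
              · omega
            · omega
          omega
        obtain ⟨e, w, hw, heq, hchar⟩ := ih (n / q) (k / q) hlt hne'
        refine ⟨e + 1, w, hw, ?_, ?_⟩
        · calc u n - u k = π * (u (n / q) - u (k / q)) := by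
                rw [hsplit_n, hsplit_k, hd]; ring
            _ = π ^ (e + 1) * w := by rw [heq]; ring
        · intro i
          cases i with
          | zero => simp [Nat.mod_one]
          | succ i =>
            rw [csc_modsplit hq n k i]
            constructor
            · rintro ⟨-, h2⟩; exact Nat.succ_le_succ ((hchar i).mp h2)
            · intro h; exact ⟨hd, (hchar i).mpr (by omega)⟩
      · -- unit case
        refine ⟨0, u n - u k, ?_, by rw [pow_zero, one_mul], ?_⟩
        · rw [hsplit_n, hsplit_k]
          have : u (n % q) + π * u (n / q) - (u (k % q) + π * u (k / q))
              = (u (n % q) - u (k % q)) + π * (u (n / q) - u (k / q)) := by ring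
          rw [this]
          apply csc_unit_add_mem
          · exact csc_udiff_unit hurep (Nat.mod_lt n (by omega)) (Nat.mod_lt k (by omega)) hd
          · exact Ideal.mul_mem_right _ _ (csc_pi_mem hmax)
        · intro i
          cases i with
          | zero => simp [Nat.mod_one]
          | succ i =>
            simp only [Nat.le_zero, Nat.succ_ne_zero, iff_false]
            intro h
            rw [csc_modsplit hq n k i] at h
            exact hd h.1
  intro n k hne; exact key (n + k) n k le_rfl hne


lemma csc_char_eq_nuQ (hq : 2 ≤ q) {n k e : ℕ} (hne : n ≠ k)
    (hchar : ∀ i : ℕ, n % q ^ i = k % q ^ i ↔ i ≤ e) : e = nuQ q n k := by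
  have hbound : e ≤ n + k := by
    by_contra h
    push_neg at h
    have h2 : n + k < q ^ e := by
      calc n + k < e := h
      _ < 2 ^ e := Nat.lt_two_pow_self
      _ ≤ q ^ e := Nat.pow_le_pow_left (by omega) e
    have hmod := (hchar e).mpr le_rfl
    rw [Nat.mod_eq_of_lt (by omega), Nat.mod_eq_of_lt (by omega)] at hmod
    exact hne hmod
  have : ((Finset.Icc 1 (n + k)).filter (fun i => n % q ^ i = k % q ^ i))
      = Finset.Icc 1 e := by
    ext i
    simp only [Finset.mem_filter, Finset.mem_Icc, hchar i]
    omega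
  rw [nuQ, this, Nat.card_Icc]
  omega

lemma csc_nufact (hq : 2 ≤ q) (hπ : Irreducible π)
    (hmax : maximalIdeal V = Ideal.span {π}) (hu0 : u 0 = 0)
    (hurep : ∀ a : V, ∃! i : ℕ, i < q ∧ a - u i ∈ maximalIdeal V)
    (hudig : ∀ n : ℕ, u n = ∑ i ∈ Finset.range (Nat.digits q n).length,
        u ((Nat.digits q n).getD i 0) * π ^ i)
    {n k : ℕ} (hne : n ≠ k) :
    ∃ w : V, IsUnit w ∧ u n - u k = π ^ (nuQ q n k) * w ∧
      (∀ i : ℕ, n % q ^ i = k % q ^ i ↔ i ≤ nuQ q n k) := by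
  obtain ⟨e, w, hw, heq, hchar⟩ := csc_ufact hq hπ hmax hu0 hurep hudig n k hne
  have he : e = nuQ q n k := csc_char_eq_nuQ hq hne hchar
  exact ⟨w, hw, he ▸ heq, he ▸ hchar⟩

lemma csc_nu_lt (hq : 2 ≤ q) (hπ : Irreducible π)
    (hmax : maximalIdeal V = Ideal.span {π}) (hu0 : u 0 = 0)
    (hurep : ∀ a : V, ∃! i : ℕ, i < q ∧ a - u i ∈ maximalIdeal V)
    (hudig : ∀ n : ℕ, u n = ∑ i ∈ Finset.range (Nat.digits q n).length,
        u ((Nat.digits q n).getD i 0) * π ^ i)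
    {n k I : ℕ} (hne : n ≠ k) (hn : n < q ^ I) (hk : k < q ^ I) :
    nuQ q n k < I := by
  obtain ⟨w, hw, heq, hchar⟩ := csc_nufact hq hπ hmax hu0 hurep hudig hne
  by_contra h
  push_neg at h
  have := (hchar I).mpr h
  rw [Nat.mod_eq_of_lt hn, Nat.mod_eq_of_lt hk] at this
  exact hne this

lemma csc_usub_ne (hq : 2 ≤ q) (hπ : Irreducible π)
    (hmax : maximalIdeal V = Ideal.span {π}) (hu0 : u 0 = 0)
    (hurep : ∀ a : V, ∃! i : ℕ, i < q ∧ a - u i ∈ maximalIdeal V)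
    (hudig : ∀ n : ℕ, u n = ∑ i ∈ Finset.range (Nat.digits q n).length,
        u ((Nat.digits q n).getD i 0) * π ^ i)
    {n k : ℕ} (hne : n ≠ k) : u n - u k ≠ 0 := by
  obtain ⟨w, hw, heq, -⟩ := csc_nufact hq hπ hmax hu0 hurep hudig hne
  rw [heq]
  exact mul_ne_zero (pow_ne_zero _ hπ.ne_zero) hw.ne_zero

lemma csc_res_one_unit {w : V} (h : residue V w = 1) : IsUnit w := by
  rw [csc_isUnit_iff]
  intro hm
  rw [(csc_res_zero w).mpr hm] at h
  exact one_ne_zero h.symm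

/-- perturbation of a difference of `u`'s below level `L` by a multiple of `π^L` -/
lemma csc_factor1 (hq : 2 ≤ q) (hπ : Irreducible π)
    (hmax : maximalIdeal V = Ideal.span {π}) (hu0 : u 0 = 0)
    (hurep : ∀ a : V, ∃! i : ℕ, i < q ∧ a - u i ∈ maximalIdeal V)
    (hudig : ∀ n : ℕ, u n = ∑ i ∈ Finset.range (Nat.digits q n).length,
        u ((Nat.digits q n).getD i 0) * π ^ i)
    {L c0 k0 : ℕ} (hc0 : c0 < q ^ L) (hk0 : k0 < q ^ L) (hne : c0 ≠ k0) (t : V) :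
    ∃ w : V, residue V w = 1 ∧ IsUnit w ∧
      (u c0 - u k0) + π ^ L * t = (u c0 - u k0) * w := by
  obtain ⟨w0, hw0, heq, hchar⟩ := csc_nufact hq hπ hmax hu0 hurep hudig hne
  set e := nuQ q c0 k0 with he
  have heL : e < L := csc_nu_lt hq hπ hmax hu0 hurep hudig hne hc0 hk0
  refine ⟨1 + π ^ (L - e) * (((hw0.unit⁻¹ : Vˣ) : V) * t), ?_, ?_, ?_⟩
  · have hres : residue V (π ^ (L - e) * (((hw0.unit⁻¹ : Vˣ) : V) * t)) = 0 := by
      rw [map_mul, map_pow, (csc_res_zero π).mpr (csc_pi_mem hmax),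
        zero_pow (by omega : L - e ≠ 0), zero_mul]
    rw [map_add, hres, map_one, add_zero]
  · apply csc_res_one_unit
    have hres : residue V (π ^ (L - e) * (((hw0.unit⁻¹ : Vˣ) : V) * t)) = 0 := by
      rw [map_mul, map_pow, (csc_res_zero π).mpr (csc_pi_mem hmax),
        zero_pow (by omega : L - e ≠ 0), zero_mul]
    rw [map_add, hres, map_one, add_zero]
  · rw [heq]
    have h2 : π ^ e * π ^ (L - e) = π ^ L := by
      rw [← pow_add]; congr 1; omega
    have h3 : π ^ e * w0 * (π ^ (L - e) * (((hw0.unit⁻¹ : Vˣ) : V) * t)) = π ^ L * t := by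
      calc π ^ e * w0 * (π ^ (L - e) * (((hw0.unit⁻¹ : Vˣ) : V) * t))
          = (π ^ e * π ^ (L - e)) * ((w0 * ((hw0.unit⁻¹ : Vˣ) : V)) * t) := by ring
      _ = π ^ L * (1 * t) := by rw [h2, hw0.mul_val_inv]
      _ = π ^ L * t := by ring
    calc π ^ e * w0 + π ^ L * t
        = π ^ e * w0 + π ^ e * w0 * (π ^ (L - e) * (((hw0.unit⁻¹ : Vˣ) : V) * t)) := by
          rw [h3]
    _ = π ^ e * w0 * (1 + π ^ (L - e) * (((hw0.unit⁻¹ : Vˣ) : V) * t)) := by ring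

/-- block decomposition of a product over `range (B * M)` -/
lemma csc_prod_block {M : Type*} [CommMonoid M] (B m1 : ℕ) (f : ℕ → M) :
    ∏ k ∈ Finset.range (B * m1), f k
      = ∏ k1 ∈ Finset.range m1, ∏ k0 ∈ Finset.range B, f (B * k1 + k0) := by
  induction m1 with
  | zero => simp
  | succ m1 ih =>
    have : B * (m1 + 1) = B * m1 + B := by ring
    rw [this, Finset.prod_range_add, ih, Finset.prod_range_succ]

lemma csc_prod_split {M : Type*} [CommMonoid M] (B m0 m1 : ℕ) (f : ℕ → M) :
    ∏ k ∈ Finset.range (m0 + B * m1), f k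
      = (∏ k1 ∈ Finset.range m1, ∏ k0 ∈ Finset.range B, f (B * k1 + k0))
        * ∏ k0 ∈ Finset.range m0, f (B * m1 + k0) := by
  rw [add_comm m0 (B * m1), Finset.prod_range_add, csc_prod_block]

lemma csc_prodval (hq : 2 ≤ q) (hπ : Irreducible π)
    (hmax : maximalIdeal V = Ideal.span {π}) (hu0 : u 0 = 0)
    (hurep : ∀ a : V, ∃! i : ℕ, i < q ∧ a - u i ∈ maximalIdeal V)
    (hudig : ∀ n : ℕ, u n = ∑ i ∈ Finset.range (Nat.digits q n).length,
        u ((Nat.digits q n).getD i 0) * π ^ i)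
    (c : ℕ) : ∀ m : ℕ, (∀ k, k < m → k ≠ c) →
    ∃ W : V, IsUnit W ∧
      ∏ k ∈ Finset.range m, (u c - u k) = π ^ (∑ k ∈ Finset.range m, nuQ q c k) * W := by
  intro m
  induction m with
  | zero => exact fun _ => ⟨1, isUnit_one, by simp⟩
  | succ m ih =>
    intro hc
    obtain ⟨W0, hW0, hW0eq⟩ := ih (fun k hk => hc k (by omega))
    have hne : c ≠ m := (hc m (by omega)).symm
    obtain ⟨w, hw, heq, -⟩ := csc_nufact hq hπ hmax hu0 hurep hudig hne
    refine ⟨W0 * w, hW0.mul hw, ?_⟩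
    rw [Finset.prod_range_succ, Finset.sum_range_succ, hW0eq, heq, pow_add]
    ring

lemma csc_cnt_le (m M : ℕ) (hM : 0 < M) :
    ((Finset.range m).filter (fun k => k % M = m % M)).card ≤ m / M := by
  have : m / M = (Finset.range (m / M)).card := by simp
  rw [this]
  apply Finset.card_le_card_of_injOn (fun k => k / M)
  · intro k hk
    simp only [Finset.mem_coe, Finset.mem_filter, Finset.mem_range] at hk
    simp only [Finset.mem_coe, Finset.mem_range]
    obtain ⟨hkm, hmod⟩ := hk
    have h1 := Nat.mod_add_div k M
    have h2 := Nat.mod_add_div m M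
    have h3 : M * (k / M) < M * (m / M) := by omega
    exact Nat.lt_of_mul_lt_mul_left h3
  · intro a ha b hb hab
    simp only [Finset.coe_filter, Set.mem_setOf_eq, Finset.mem_range] at ha hb
    have h1 := Nat.mod_add_div a M
    have h2 := Nat.mod_add_div b M
    simp only at hab
    have h3 : M * (a / M) = M * (b / M) := by rw [hab]
    omega

lemma csc_cnt_ge (c m M : ℕ) (hM : 0 < M) :
    m / M ≤ ((Finset.range m).filter (fun k => k % M = c % M)).card := by
  have : m / M = (Finset.range (m / M)).card := by simp
  rw [this]
  apply Finset.card_le_card_of_injOn (fun j => c % M + M * j)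
  · intro j hj
    simp only [Finset.mem_coe, Finset.mem_range] at hj
    simp only [Finset.mem_coe, Finset.mem_filter, Finset.mem_range]
    constructor
    · have h1 : M * (j + 1) ≤ M * (m / M) := Nat.mul_le_mul_left _ (by omega)
      have h2 := Nat.mod_add_div m M
      have h3 : M * (j + 1) = M * j + M := by ring
      have h4 : c % M < M := Nat.mod_lt _ hM
      omega
    · rw [Nat.add_mul_mod_self_left]
      exact Nat.mod_mod_of_dvd c dvd_rfl
  · intro a _ b _ hab
    simp only at hab
    have : M * a = M * b := by omega
    exact Nat.eq_of_mul_eq_mul_left hM this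

lemma csc_cnt_gt (c m M : ℕ) (hM : 0 < M) (h : c % M < m % M) :
    m / M + 1 ≤ ((Finset.range m).filter (fun k => k % M = c % M)).card := by
  have : m / M + 1 = (Finset.range (m / M + 1)).card := by simp
  rw [this]
  apply Finset.card_le_card_of_injOn (fun j => c % M + M * j)
  · intro j hj
    simp only [Finset.mem_coe, Finset.mem_range] at hj
    simp only [Finset.mem_coe, Finset.mem_filter, Finset.mem_range]
    constructor
    · have h1 : M * j ≤ M * (m / M) := Nat.mul_le_mul_left _ (by omega)
      have h2 := Nat.mod_add_div m M
      omega
    · rw [Nat.add_mul_mod_self_left]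
      exact Nat.mod_mod_of_dvd c dvd_rfl
  · intro a _ b _ hab
    simp only at hab
    have : M * a = M * b := by omega
    exact Nat.eq_of_mul_eq_mul_left hM this

lemma csc_swap (hq : 2 ≤ q) (hπ : Irreducible π)
    (hmax : maximalIdeal V = Ideal.span {π}) (hu0 : u 0 = 0)
    (hurep : ∀ a : V, ∃! i : ℕ, i < q ∧ a - u i ∈ maximalIdeal V)
    (hudig : ∀ n : ℕ, u n = ∑ i ∈ Finset.range (Nat.digits q n).length,
        u ((Nat.digits q n).getD i 0) * π ^ i)
    (c m I : ℕ) (hc : ∀ k, k < m → k ≠ c) (hcI : c < q ^ I) (hmI : m ≤ q ^ I) :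
    ∑ k ∈ Finset.range m, nuQ q c k
      = ∑ i ∈ Finset.Icc 1 I,
          ((Finset.range m).filter (fun k => k % q ^ i = c % q ^ i)).card := by
  have hk : ∀ k ∈ Finset.range m, nuQ q c k
      = ((Finset.Icc 1 I).filter (fun i => c % q ^ i = k % q ^ i)).card := by
    intro k hk'
    rw [Finset.mem_range] at hk'
    have hne : c ≠ k := (hc k hk').symm
    obtain ⟨w, hw, heq, hchar⟩ := csc_nufact hq hπ hmax hu0 hurep hudig hne
    have hlt : nuQ q c k < I :=
      csc_nu_lt hq hπ hmax hu0 hurep hudig hne hcI (lt_of_lt_of_le hk' hmI)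
    have : (Finset.Icc 1 I).filter (fun i => c % q ^ i = k % q ^ i)
        = Finset.Icc 1 (nuQ q c k) := by
      ext i
      simp only [Finset.mem_filter, Finset.mem_Icc, hchar i]
      omega
    rw [this, Nat.card_Icc]
    omega
  rw [Finset.sum_congr rfl hk]
  simp only [Finset.card_filter]
  rw [Finset.sum_comm]
  apply Finset.sum_congr rfl
  intro i _
  apply Finset.sum_congr rfl
  intro k _
  by_cases h : c % q ^ i = k % q ^ i
  · rw [if_pos h, if_pos h.symm]
  · rw [if_neg h, if_neg (fun hh : k % q ^ i = c % q ^ i => h hh.symm)]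

lemma csc_mainB (hq : 2 ≤ q) (hπ : Irreducible π)
    (hmax : maximalIdeal V = Ideal.span {π}) (hu0 : u 0 = 0)
    (hurep : ∀ a : V, ∃! i : ℕ, i < q ∧ a - u i ∈ maximalIdeal V)
    (hudig : ∀ n : ℕ, u n = ∑ i ∈ Finset.range (Nat.digits q n).length,
        u ((Nat.digits q n).getD i 0) * π ^ i)
    {F : ℕ → V → V}
    (hF : ∀ (n : ℕ) (x : V),
        (∏ k ∈ Finset.range n, (u n - u k)) * F n x = ∏ k ∈ Finset.range n, (x - u k))
    {L a b m : ℕ} (hL : 1 ≤ L) (ha : a < q ^ L) (hm0 : a < m % q ^ L)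
    (hmZ : m ≤ a + q ^ L * b) :
    residue V (F m (u (a + q ^ L * b))) = 0 := by
  set Z := a + q ^ L * b with hZ
  have hq1 : 1 < q := by omega
  have hZmod : Z % q ^ L = a := by
    rw [hZ, Nat.add_mul_mod_self_left, Nat.mod_eq_of_lt ha]
  have hmne : m ≠ Z := by
    intro h; rw [h, hZmod] at hm0; omega
  have hmZ' : m < Z := lt_of_le_of_ne hmZ hmne
  -- choose I
  set I := L + Z + 1 with hI
  have hqI : Z < q ^ I := by
    calc Z < I := by omega
    _ < 2 ^ I := Nat.lt_two_pow_self
    _ ≤ q ^ I := Nat.pow_le_pow_left (by omega) I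
  have hLI : L ≤ I := by omega
  have hcm : ∀ k, k < m → k ≠ m := fun k hk => by omega
  have hcZ : ∀ k, k < m → k ≠ Z := fun k hk => by omega
  obtain ⟨WC, hWC, hCeq⟩ := csc_prodval hq hπ hmax hu0 hurep hudig m m hcm
  obtain ⟨WN, hWN, hNeq⟩ := csc_prodval hq hπ hmax hu0 hurep hudig Z m hcZ
  have hvC := csc_swap hq hπ hmax hu0 hurep hudig m m I hcm (by omega) (by omega)
  have hvN := csc_swap hq hπ hmax hu0 hurep hudig Z m I hcZ (by omega) (by omega)
  set vC := ∑ k ∈ Finset.range m, nuQ q m k with hvCdef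
  set vN := ∑ k ∈ Finset.range m, nuQ q Z k with hvNdef
  have hkey : vC + 1 ≤ vN := by
    rw [hvC, hvN]
    have hstep : ∀ i ∈ Finset.Icc 1 I,
        ((Finset.range m).filter (fun k => k % q ^ i = m % q ^ i)).card
          + (if i = L then 1 else 0)
        ≤ ((Finset.range m).filter (fun k => k % q ^ i = Z % q ^ i)).card := by
      intro i hi
      have hMi : 0 < q ^ i := pow_pos (by omega) i
      by_cases hiL : i = L
      · subst hiL
        rw [if_pos rfl]
        have h1 := csc_cnt_le m (q ^ i) hMi
        have h2 := csc_cnt_gt Z m (q ^ i) hMi (by rw [hZmod]; omega)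
        omega
      · rw [if_neg hiL]
        have h1 := csc_cnt_le m (q ^ i) hMi
        have h2 := csc_cnt_ge Z m (q ^ i) hMi
        omega
    have hsum := Finset.sum_le_sum hstep
    rw [Finset.sum_add_distrib] at hsum
    have hL' : ∑ i ∈ Finset.Icc 1 I, (if i = L then 1 else 0) = 1 := by
      rw [Finset.sum_ite_eq' (Finset.Icc 1 I) L (fun _ => 1)]
      rw [if_pos (by simp [Finset.mem_Icc]; omega)]
    omega
  -- now conclude
  have hmain := hF m (u Z)
  rw [hCeq, hNeq] at hmain
  have hsplit : π ^ vN * WN = π ^ vC * (π ^ (vN - vC) * WN) := by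
    rw [← mul_assoc, ← pow_add]
    congr 2
    omega
  rw [hsplit, mul_assoc] at hmain
  have hcan : WC * F m (u Z) = π ^ (vN - vC) * WN :=
    mul_left_cancel₀ (pow_ne_zero _ hπ.ne_zero) hmain
  have hres := congrArg (residue V) hcan
  rw [map_mul, map_mul, map_pow, (csc_res_zero π).mpr (csc_pi_mem hmax),
    zero_pow (by omega : vN - vC ≠ 0), zero_mul] at hres
  have hWCne : residue V WC ≠ 0 := (residue_ne_zero_iff_isUnit WC).mpr hWC
  exact (mul_eq_zero.mp hres).resolve_left hWCne

/-- generic: a product of factors each equal to the reference factor times a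
residue-one unit is the reference product times a residue-one unit. -/
lemma csc_prodex {ι : Type*} (s : Finset ι) (A f : ι → V)
    (h : ∀ k ∈ s, ∃ U : V, residue V U = 1 ∧ A k = f k * U) :
    ∃ U : V, residue V U = 1 ∧ (∏ k ∈ s, A k) = (∏ k ∈ s, f k) * U := by
  classical
  induction s using Finset.induction_on with
  | empty => exact ⟨1, map_one _, by simp⟩
  | @insert x s' hx ih =>
    obtain ⟨U0, hU0, hU0eq⟩ := ih (fun k hk => h k (Finset.mem_insert_of_mem hk))
    obtain ⟨w, hw, hweq⟩ := h x (Finset.mem_insert_self x s')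
    refine ⟨U0 * w, by rw [map_mul, hU0, hw, one_mul], ?_⟩
    rw [Finset.prod_insert hx, Finset.prod_insert hx, hU0eq, hweq]
    ring

/-- the residue of `∏_{e<q, e≠d} (u d - u e)` is independent of `d < q`. -/
lemma csc_fld (hq : 2 ≤ q)
    (hurep : ∀ a : V, ∃! i : ℕ, i < q ∧ a - u i ∈ maximalIdeal V)
    {d d' : ℕ} (hd : d < q) (hd' : d' < q) :
    residue V (∏ e ∈ (Finset.range q).erase d, (u d - u e))
      = residue V (∏ e ∈ (Finset.range q).erase d', (u d' - u e)) := by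
  classical
  set ρ := residue V
  have hinj : ∀ e ∈ Finset.range q, ∀ e' ∈ Finset.range q,
      ρ (u e) = ρ (u e') → e = e' := by
    intro e he e' he' hee
    by_contra hne
    have hu := csc_udiff_unit hurep (Finset.mem_range.mp he) (Finset.mem_range.mp he') hne
    have : ρ (u e - u e') ≠ 0 := (residue_ne_zero_iff_isUnit _).mpr hu
    rw [map_sub, hee, sub_self] at this
    exact this rfl
  set E : Finset (ResidueField V) := (Finset.range q).image (fun e => ρ (u e)) with hE
  have hEmem : ∀ x : ResidueField V, x ∈ E := by
    intro x
    obtain ⟨a, rfl⟩ := residue_surjective (R := V) x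
    obtain ⟨i, ⟨hi, hmem⟩, -⟩ := hurep a
    have : ρ a = ρ (u i) := by
      have h0 : ρ (a - u i) = 0 := (csc_res_zero _).mpr hmem
      rw [map_sub, sub_eq_zero] at h0
      exact h0
    rw [this]
    exact Finset.mem_image.mpr ⟨i, Finset.mem_range.mpr hi, rfl⟩
  have hEcard : E.card = q := by
    rw [hE, Finset.card_image_of_injOn (fun e he e' he' h => hinj e he e' he' h),
      Finset.card_range]
  have key : ∀ c : ℕ, c < q →
      ρ (∏ e ∈ (Finset.range q).erase c, (u c - u e)) = ∏ t ∈ E.erase 0, t := by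
    intro c hc
    rw [map_prod]
    simp only [map_sub]
    have hinj' : ∀ e ∈ (Finset.range q).erase c, ∀ e' ∈ (Finset.range q).erase c,
        ρ (u c) - ρ (u e) = ρ (u c) - ρ (u e') → e = e' := by
      intro e he e' he' hh
      exact hinj e (Finset.mem_of_mem_erase he) e' (Finset.mem_of_mem_erase he')
        (sub_right_inj.mp hh)
    have hset : ((Finset.range q).erase c).image (fun e => ρ (u c) - ρ (u e))
        = E.erase 0 := by
      apply Finset.eq_of_subset_of_card_le
      · intro x hx
        obtain ⟨e, he, rfl⟩ := Finset.mem_image.mp hx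
        refine Finset.mem_erase.mpr ⟨?_, hEmem _⟩
        have hne := Finset.ne_of_mem_erase he
        intro h0
        rw [sub_eq_zero] at h0
        exact hne (hinj e (Finset.mem_of_mem_erase he) c (Finset.mem_range.mpr hc) h0.symm)
      · rw [Finset.card_image_of_injOn (fun e he e' he' h => hinj' e he e' he' h)]
        rw [Finset.card_erase_of_mem (hEmem 0), hEcard,
          Finset.card_erase_of_mem (Finset.mem_range.mpr hc), Finset.card_range]
    calc ∏ e ∈ (Finset.range q).erase c, (ρ (u c) - ρ (u e))
        = ∏ x ∈ ((Finset.range q).erase c).image (fun e => ρ (u c) - ρ (u e)),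
            x := (Finset.prod_image (f := fun x : ResidueField V => x) hinj').symm
    _ = ∏ t ∈ E.erase 0, t := by rw [hset]
  rw [key d hd, key d' hd']

lemma csc_D_ne (hq : 2 ≤ q)
    (hurep : ∀ a : V, ∃! i : ℕ, i < q ∧ a - u i ∈ maximalIdeal V)
    {d : ℕ} (hd : d < q) :
    residue V (∏ e ∈ (Finset.range q).erase d, (u d - u e)) ≠ 0 := by
  rw [map_prod]
  rw [Finset.prod_ne_zero_iff]
  intro e he
  exact (residue_ne_zero_iff_isUnit _).mpr
    (csc_udiff_unit hurep hd (Finset.mem_range.mp (Finset.mem_of_mem_erase he))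
      (Finset.ne_of_mem_erase he).symm)

/-- the unit part of `∏_{k < q^L, k ≠ c} (u c - u k)` has residue independent of `c`. -/
lemma csc_qres (hq : 2 ≤ q) (hπ : Irreducible π)
    (hmax : maximalIdeal V = Ideal.span {π}) (hu0 : u 0 = 0)
    (hurep : ∀ a : V, ∃! i : ℕ, i < q ∧ a - u i ∈ maximalIdeal V)
    (hudig : ∀ n : ℕ, u n = ∑ i ∈ Finset.range (Nat.digits q n).length,
        u ((Nat.digits q n).getD i 0) * π ^ i) :
    ∀ L : ℕ, ∃ (T : ℕ) (r : ResidueField V), r ≠ 0 ∧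
      ∀ c : ℕ, c < q ^ L → ∃ Qc : V, IsUnit Qc ∧ residue V Qc = r ∧
        ∏ k ∈ (Finset.range (q ^ L)).erase c, (u c - u k) = π ^ T * Qc := by
  intro L
  induction L with
  | zero =>
    refine ⟨0, 1, one_ne_zero, ?_⟩
    intro c hc
    have : c = 0 := by simpa using hc
    subst this
    refine ⟨1, isUnit_one, map_one _, by simp⟩
  | succ L IH =>
    obtain ⟨T', r', hr', hIH⟩ := IH
    have hq0 : 0 < q := by omega
    have hqL : 0 < q ^ L := pow_pos hq0 L
    set Dref : V := ∏ e ∈ (Finset.range q).erase 0, (u 0 - u e) with hDref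
    refine ⟨(q ^ L - 1) + T', r' * (residue V Dref) ^ (q ^ L), ?_, ?_⟩
    · exact mul_ne_zero hr' (pow_ne_zero _ (csc_D_ne hq hurep hq0))
    intro c hc
    set d := c % q with hdd
    set c₂ := c / q with hc₂d
    have hd : d < q := Nat.mod_lt _ hq0
    have hc₂ : c₂ < q ^ L := by
      rw [hc₂d, Nat.div_lt_iff_lt_mul hq0]
      calc c < q ^ (L + 1) := hc
      _ = q ^ L * q := by ring
    set Dd : V := ∏ e ∈ (Finset.range q).erase d, (u d - u e) with hDd
    set g : ℕ → V := fun k => if k = c then 1 else u c - u k with hg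
    -- step 1 : erase → full range
    have step1 : ∏ k ∈ (Finset.range (q ^ (L + 1))).erase c, (u c - u k)
        = ∏ k ∈ Finset.range (q ^ (L + 1)), g k := by
      rw [← Finset.prod_erase _ (show g c = 1 by simp [hg])]
      apply Finset.prod_congr rfl
      intro k hk
      rw [hg]
      simp only [if_neg (Finset.ne_of_mem_erase hk)]
    -- step 2 : block split
    have hpow : q ^ (L + 1) = q * q ^ L := by ring
    have step2 : ∏ k ∈ Finset.range (q ^ (L + 1)), g k
        = ∏ k₂ ∈ Finset.range (q ^ L), ∏ e ∈ Finset.range q, g (q * k₂ + e) := by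
      rw [hpow, mul_comm q (q ^ L)]
      have := csc_prod_block (M := V) q (q ^ L) g
      rw [mul_comm q (q ^ L)] at this
      exact this
    -- basic facts about c's digits
    have hcsum : d + q * c₂ = c := by rw [hdd, hc₂d]; exact Nat.mod_add_div c q
    have husplit : ∀ k₂ e : ℕ, e < q → u (q * k₂ + e) = u e + π * u k₂ := by
      intro k₂ e he
      have := csc_u_base hq hu0 hudig he k₂
      rwa [add_comm (q * k₂) e]
    have huc : u c = u d + π * u c₂ := by
      have := csc_u_base hq hu0 hudig hd c₂
      rwa [hcsum] at this
    have harg : ∀ k₂ e : ℕ, e < q → (q * k₂ + e = c ↔ (e = d ∧ k₂ = c₂)) := by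
      intro k₂ e he
      constructor
      · intro h
        have h1 : e = c % q := by
          rw [← h, Nat.mul_add_mod, Nat.mod_eq_of_lt he]
        have h2 : k₂ = c / q := by
          rw [← h, Nat.mul_add_div hq0, Nat.div_eq_of_lt he, add_zero]
        exact ⟨h1, h2⟩
      · rintro ⟨rfl, rfl⟩; omega
    -- inner product over a non-diagonal block
    have hinner : ∀ k₂ ∈ (Finset.range (q ^ L)).erase c₂,
        ∃ U : V, residue V U = 1 ∧ (∏ e ∈ Finset.range q, g (q * k₂ + e))
          = (π * (u c₂ - u k₂) * Dd) * U := by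
      intro k₂ hk₂
      have hk₂ne : k₂ ≠ c₂ := Finset.ne_of_mem_erase hk₂
      have hgk : ∀ e ∈ Finset.range q, g (q * k₂ + e) = u c - u (q * k₂ + e) := by
        intro e he
        rw [hg]
        simp only
        rw [if_neg]
        intro h
        exact hk₂ne ((harg k₂ e (Finset.mem_range.mp he)).mp h).2
      rw [Finset.prod_congr rfl hgk,
        ← Finset.mul_prod_erase (Finset.range q) _ (Finset.mem_range.mpr hd)]
      have hdfac : u c - u (q * k₂ + d) = π * (u c₂ - u k₂) := by
        rw [huc, husplit k₂ d hd]; ring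
      have hrest : ∀ e ∈ (Finset.range q).erase d, ∃ U : V, residue V U = 1 ∧
          u c - u (q * k₂ + e) = (u d - u e) * U := by
        intro e he
        have he' : e < q := Finset.mem_range.mp (Finset.mem_of_mem_erase he)
        have hrw : u c - u (q * k₂ + e) = (u d - u e) + π ^ 1 * (u c₂ - u k₂) := by
          rw [huc, husplit k₂ e he', pow_one]; ring
        obtain ⟨w, hw1, hw2, hw3⟩ := csc_factor1 hq hπ hmax hu0 hurep hudig
          (L := 1) (by simpa using hd) (by simpa using he')
          (Finset.ne_of_mem_erase he).symm (u c₂ - u k₂)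
        exact ⟨w, hw1, by rw [hrw, hw3]⟩
      obtain ⟨U, hU, hUeq⟩ := csc_prodex ((Finset.range q).erase d) _ _ hrest
      refine ⟨U, hU, ?_⟩
      rw [hdfac, hUeq, hDd]
      ring
    -- the diagonal block
    have hdiag : ∏ e ∈ Finset.range q, g (q * c₂ + e) = Dd := by
      rw [← Finset.mul_prod_erase (Finset.range q) _ (Finset.mem_range.mpr hd)]
      have h1 : g (q * c₂ + d) = 1 := by
        rw [hg]
        simp only
        rw [if_pos (by omega)]
      rw [h1, one_mul, hDd]
      apply Finset.prod_congr rfl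
      intro e he
      have he' : e < q := Finset.mem_range.mp (Finset.mem_of_mem_erase he)
      have hne : q * c₂ + e ≠ c := fun h =>
        (Finset.ne_of_mem_erase he) ((harg c₂ e he').mp h).1
      rw [hg]
      simp only
      rw [if_neg hne, huc, husplit c₂ e he']
      ring
    -- assemble
    obtain ⟨Q', hQ'unit, hQ'res, hQ'eq⟩ := hIH c₂ hc₂
    obtain ⟨U, hU, hUeq⟩ := csc_prodex ((Finset.range (q ^ L)).erase c₂) _ _ hinner
    have hDdunit : IsUnit Dd := (residue_ne_zero_iff_isUnit _).mp (csc_D_ne hq hurep hd)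
    refine ⟨Dd ^ (q ^ L) * Q' * U, ((hDdunit.pow _).mul hQ'unit).mul (csc_res_one_unit hU),
      ?_, ?_⟩
    · rw [map_mul, map_mul, map_pow, hU, hQ'res, mul_one]
      rw [csc_fld hq hurep hd hq0]
      rw [← hDref]
      ring
    · rw [step1, step2,
        ← Finset.mul_prod_erase (Finset.range (q ^ L)) _ (Finset.mem_range.mpr hc₂),
        hdiag, hUeq]
      have hprod : ∏ k₂ ∈ (Finset.range (q ^ L)).erase c₂, (π * (u c₂ - u k₂) * Dd)
          = π ^ (q ^ L - 1) * Dd ^ (q ^ L - 1)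
            * ∏ k₂ ∈ (Finset.range (q ^ L)).erase c₂, (u c₂ - u k₂) := by
        rw [Finset.prod_mul_distrib, Finset.prod_mul_distrib, Finset.prod_const,
          Finset.prod_const, Finset.card_erase_of_mem (Finset.mem_range.mpr hc₂),
          Finset.card_range]
        ring
      rw [hprod, hQ'eq]
      have hDpow : Dd ^ (q ^ L - 1) * Dd = Dd ^ (q ^ L) := by
        rw [← pow_succ]
        congr 1
        omega
      rw [pow_add, ← hDpow]
      ring

/-- factorization of `∏_{k<m0+q^L m1} (u(c0+q^L c1) - u k)` when `m0 ≤ c0 < q^L`. -/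
lemma csc_prodfact (hq : 2 ≤ q) (hπ : Irreducible π)
    (hmax : maximalIdeal V = Ideal.span {π}) (hu0 : u 0 = 0)
    (hurep : ∀ a : V, ∃! i : ℕ, i < q ∧ a - u i ∈ maximalIdeal V)
    (hudig : ∀ n : ℕ, u n = ∑ i ∈ Finset.range (Nat.digits q n).length,
        u ((Nat.digits q n).getD i 0) * π ^ i)
    {L c0 c1 m0 m1 : ℕ} (hc0 : c0 < q ^ L) (hm0 : m0 ≤ c0) :
    ∃ U : V, residue V U = 1 ∧
      ∏ k ∈ Finset.range (m0 + q ^ L * m1), (u (c0 + q ^ L * c1) - u k)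
        = π ^ (L * m1) * (∏ k1 ∈ Finset.range m1, (u c1 - u k1))
          * (∏ k0 ∈ (Finset.range (q ^ L)).erase c0, (u c0 - u k0)) ^ m1
          * (∏ k0 ∈ Finset.range m0, (u c0 - u k0)) * U := by
  have husp := csc_u_split hq hu0 hudig L
  have huC : u (c0 + q ^ L * c1) = u c0 + π ^ L * u c1 := husp c0 c1 hc0
  set P : V := ∏ k0 ∈ (Finset.range (q ^ L)).erase c0, (u c0 - u k0) with hP
  -- blocks
  have hblock : ∀ k1 ∈ Finset.range m1, ∃ U : V, residue V U = 1 ∧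
      (∏ k0 ∈ Finset.range (q ^ L), (u (c0 + q ^ L * c1) - u (q ^ L * k1 + k0)))
        = (π ^ L * (u c1 - u k1) * P) * U := by
    intro k1 _
    have hfac : ∀ k0, k0 < q ^ L →
        u (c0 + q ^ L * c1) - u (q ^ L * k1 + k0)
          = (u c0 - u k0) + π ^ L * (u c1 - u k1) := by
      intro k0 hk0
      have := husp k0 k1 hk0
      rw [add_comm (q ^ L * k1) k0, this, huC]
      ring
    rw [← Finset.mul_prod_erase (Finset.range (q ^ L)) _ (Finset.mem_range.mpr hc0)]
    have hdd : u (c0 + q ^ L * c1) - u (q ^ L * k1 + c0) = π ^ L * (u c1 - u k1) := by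
      rw [hfac c0 hc0]
      ring
    have hrest : ∀ k0 ∈ (Finset.range (q ^ L)).erase c0, ∃ U : V, residue V U = 1 ∧
        u (c0 + q ^ L * c1) - u (q ^ L * k1 + k0) = (u c0 - u k0) * U := by
      intro k0 hk0
      have hk0' : k0 < q ^ L := Finset.mem_range.mp (Finset.mem_of_mem_erase hk0)
      obtain ⟨w, hw1, hw2, hw3⟩ := csc_factor1 hq hπ hmax hu0 hurep hudig hc0 hk0'
        (Finset.ne_of_mem_erase hk0).symm (u c1 - u k1)
      exact ⟨w, hw1, by rw [hfac k0 hk0', hw3]⟩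
    obtain ⟨U, hU, hUeq⟩ := csc_prodex ((Finset.range (q ^ L)).erase c0) _ _ hrest
    refine ⟨U, hU, ?_⟩
    rw [hdd, hUeq, hP]
    ring
  obtain ⟨U1, hU1, hU1eq⟩ := csc_prodex (Finset.range m1) _ _ hblock
  -- partial block
  have hpartial : ∀ k0 ∈ Finset.range m0, ∃ U : V, residue V U = 1 ∧
      u (c0 + q ^ L * c1) - u (q ^ L * m1 + k0) = (u c0 - u k0) * U := by
    intro k0 hk0
    have hk0m : k0 < m0 := Finset.mem_range.mp hk0
    have hk0' : k0 < q ^ L := by omega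
    obtain ⟨w, hw1, hw2, hw3⟩ := csc_factor1 hq hπ hmax hu0 hurep hudig hc0 hk0'
      (by omega) (u c1 - u m1)
    refine ⟨w, hw1, ?_⟩
    have := husp k0 m1 hk0'
    rw [add_comm (q ^ L * m1) k0, this, huC, ← hw3]
    ring
  obtain ⟨U2, hU2, hU2eq⟩ := csc_prodex (Finset.range m0) _ _ hpartial
  refine ⟨U1 * U2, by rw [map_mul, hU1, hU2, one_mul], ?_⟩
  rw [csc_prod_split (q ^ L) m0 m1, hU1eq, hU2eq]
  rw [Finset.prod_mul_distrib, Finset.prod_mul_distrib, Finset.prod_const,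
    Finset.prod_const, Finset.card_range]
  rw [← pow_mul π]
  ring

/-- MAIN LEMMA, multiplicative case. -/
lemma csc_mainA (hq : 2 ≤ q) (hπ : Irreducible π)
    (hmax : maximalIdeal V = Ideal.span {π}) (hu0 : u 0 = 0)
    (hurep : ∀ a : V, ∃! i : ℕ, i < q ∧ a - u i ∈ maximalIdeal V)
    (hudig : ∀ n : ℕ, u n = ∑ i ∈ Finset.range (Nat.digits q n).length,
        u ((Nat.digits q n).getD i 0) * π ^ i)
    {F : ℕ → V → V}
    (hF : ∀ (n : ℕ) (x : V),
        (∏ k ∈ Finset.range n, (u n - u k)) * F n x = ∏ k ∈ Finset.range n, (x - u k))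
    {L a b m0 m1 : ℕ} (ha : a < q ^ L) (hm0 : m0 ≤ a) :
    residue V (F (m0 + q ^ L * m1) (u (a + q ^ L * b)))
      = residue V (F m0 (u a)) * residue V (F m1 (u b)) := by
  have hm0' : m0 < q ^ L := lt_of_le_of_lt hm0 ha
  obtain ⟨UC, hUC, hCeq⟩ := csc_prodfact hq hπ hmax hu0 hurep hudig hm0' (le_refl m0)
    (c1 := m1)
  obtain ⟨UN, hUN, hNeq⟩ := csc_prodfact hq hπ hmax hu0 hurep hudig ha hm0 (c1 := b)
  obtain ⟨T, r, hr, hqres⟩ := csc_qres hq hπ hmax hu0 hurep hudig L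
  obtain ⟨Qm, hQmU, hQmres, hQmeq⟩ := hqres m0 hm0'
  obtain ⟨Qa, hQaU, hQares, hQaeq⟩ := hqres a ha
  set m := m0 + q ^ L * m1 with hm
  set Z := a + q ^ L * b with hZ
  have hmain := hF m (u Z)
  have hmC : ∏ k ∈ Finset.range m, (u m - u k)
      = π ^ (L * m1) * (∏ k1 ∈ Finset.range m1, (u m1 - u k1))
        * (π ^ T * Qm) ^ m1 * (∏ k0 ∈ Finset.range m0, (u m0 - u k0)) * UC := by
    rw [hm] at hCeq ⊢
    rw [hCeq, hQmeq]
  have hmN : ∏ k ∈ Finset.range m, (u Z - u k)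
      = π ^ (L * m1) * (∏ k1 ∈ Finset.range m1, (u b - u k1))
        * (π ^ T * Qa) ^ m1 * (∏ k0 ∈ Finset.range m0, (u a - u k0)) * UN := by
    rw [hm, hZ] at hNeq ⊢
    rw [hNeq, hQaeq]
  rw [hmC, hmN] at hmain
  rw [← hF m0 (u a), ← hF m1 (u b)] at hmain
  set C0 : V := ∏ k0 ∈ Finset.range m0, (u m0 - u k0) with hC0
  set C1 : V := ∏ k1 ∈ Finset.range m1, (u m1 - u k1) with hC1
  have hC0ne : C0 ≠ 0 := by
    rw [hC0, Finset.prod_ne_zero_iff]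
    intro k hk
    exact csc_usub_ne hq hπ hmax hu0 hurep hudig (by have := Finset.mem_range.mp hk; omega)
  have hC1ne : C1 ≠ 0 := by
    rw [hC1, Finset.prod_ne_zero_iff]
    intro k hk
    exact csc_usub_ne hq hπ hmax hu0 hurep hudig (by have := Finset.mem_range.mp hk; omega)
  have hPne : (π ^ (L * m1) * (π ^ T) ^ m1 * C1 * C0 : V) ≠ 0 :=
    mul_ne_zero (mul_ne_zero (mul_ne_zero (pow_ne_zero _ hπ.ne_zero)
      (pow_ne_zero _ (pow_ne_zero _ hπ.ne_zero))) hC1ne) hC0ne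
  have hcan : Qm ^ m1 * UC * F m (u Z)
      = Qa ^ m1 * UN * (F m1 (u b) * F m0 (u a)) := by
    apply mul_left_cancel₀ hPne
    calc (π ^ (L * m1) * (π ^ T) ^ m1 * C1 * C0) * (Qm ^ m1 * UC * F m (u Z))
        = π ^ (L * m1) * C1 * (π ^ T * Qm) ^ m1 * C0 * UC * F m (u Z) := by
          rw [mul_pow]; ring
    _ = π ^ (L * m1) * (C1 * F m1 (u b)) * (π ^ T * Qa) ^ m1
          * (C0 * F m0 (u a)) * UN := hmain
    _ = (π ^ (L * m1) * (π ^ T) ^ m1 * C1 * C0) * (Qa ^ m1 * UN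
          * (F m1 (u b) * F m0 (u a))) := by
          rw [mul_pow]; ring
  have hres := congrArg (residue V) hcan
  simp only [map_mul, map_pow, hQmres, hQares, hUC, hUN, mul_one] at hres
  have := mul_left_cancel₀ (pow_ne_zero m1 hr) hres
  rw [this, mul_comm]

lemma csc_gamma (hq : 2 ≤ q)
    (hurep : ∀ a : V, ∃! i : ℕ, i < q ∧ a - u i ∈ maximalIdeal V)
    {g : V} (hg : g ∉ maximalIdeal V)
    (hgen : ∀ a : V, a ∉ maximalIdeal V →
        ∃ j : ℕ, residue V a = residue V g ^ j) :
    residue V g ≠ 0 ∧ residue V g ^ (q - 1) = 1 ∧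
      (∀ i, i < q - 1 → ∀ j, j < q - 1 →
        residue V g ^ i = residue V g ^ j → i = j) ∧
      (∀ x : ResidueField V, x ≠ 0 → ∃ j, j < q - 1 ∧ x = residue V g ^ j) := by
  classical
  set ρ := residue V
  set γ := ρ g with hγ
  have hγ0 : γ ≠ 0 := by
    rw [hγ]
    exact (residue_ne_zero_iff_isUnit _).mpr ((csc_isUnit_iff g).mpr hg)
  have hinj : ∀ e ∈ Finset.range q, ∀ e' ∈ Finset.range q,
      ρ (u e) = ρ (u e') → e = e' := by
    intro e he e' he' hee
    by_contra hne
    have hu := csc_udiff_unit hurep (Finset.mem_range.mp he) (Finset.mem_range.mp he') hne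
    have : ρ (u e - u e') ≠ 0 := (residue_ne_zero_iff_isUnit _).mpr hu
    rw [map_sub, hee, sub_self] at this
    exact this rfl
  set E : Finset (ResidueField V) := (Finset.range q).image (fun e => ρ (u e)) with hE
  have hEmem : ∀ x : ResidueField V, x ∈ E := by
    intro x
    obtain ⟨a, rfl⟩ := residue_surjective (R := V) x
    obtain ⟨i, ⟨hi, hmem⟩, -⟩ := hurep a
    have : ρ a = ρ (u i) := by
      have h0 : ρ (a - u i) = 0 := (csc_res_zero _).mpr hmem
      rwa [map_sub, sub_eq_zero] at h0
    rw [this]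
    exact Finset.mem_image.mpr ⟨i, Finset.mem_range.mpr hi, rfl⟩
  have hEcard : E.card = q := by
    rw [hE, Finset.card_image_of_injOn (fun e he e' he' h => hinj e he e' he' h),
      Finset.card_range]
  letI : Fintype (ResidueField V) := ⟨E, hEmem⟩
  have hcardK : Fintype.card (ResidueField V) = q := by
    rw [← hEcard]
    apply Finset.card_bij (fun x _ => x) <;> simp [hEmem]
  have h2 : γ ^ (q - 1) = 1 := by
    have := FiniteField.pow_card_sub_one_eq_one γ hγ0
    rwa [hcardK] at this
  have hfin : IsOfFinOrder γ :=
    isOfFinOrder_iff_pow_eq_one.mpr ⟨q - 1, by omega, h2⟩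
  have hopos : 0 < orderOf γ := hfin.orderOf_pos
  -- all nonzero elements are powers of γ
  have hpow : ∀ x : ResidueField V, x ≠ 0 → ∃ t, x = γ ^ t := by
    intro x hx
    obtain ⟨a, rfl⟩ := residue_surjective (R := V) x
    have ha : a ∉ maximalIdeal V := by
      intro h
      exact hx ((csc_res_zero a).mpr h)
    obtain ⟨t, ht⟩ := hgen a ha
    exact ⟨t, ht⟩
  have hOlt : ¬ orderOf γ < q - 1 := by
    intro hlt
    have hsub : E.erase 0 ⊆ (Finset.range (orderOf γ)).image (fun t => γ ^ t) := by
      intro x hx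
      obtain ⟨t, rfl⟩ := hpow x (Finset.ne_of_mem_erase hx)
      refine Finset.mem_image.mpr ⟨t % orderOf γ, ?_, ?_⟩
      · exact Finset.mem_range.mpr (Nat.mod_lt _ hopos)
      · exact pow_mod_orderOf γ t
    have hc1 : (E.erase 0).card = q - 1 := by
      rw [Finset.card_erase_of_mem (hEmem 0), hEcard]
    have hc2 := Finset.card_le_card hsub
    have hc3 := Finset.card_image_le
      (s := Finset.range (orderOf γ)) (f := fun t => γ ^ t)
    rw [Finset.card_range] at hc3
    omega
  have hOdvd : orderOf γ ∣ q - 1 := orderOf_dvd_of_pow_eq_one h2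
  have hOeq : orderOf γ = q - 1 := by
    have := Nat.le_of_dvd (by omega) hOdvd
    omega
  refine ⟨hγ0, h2, ?_, ?_⟩
  · have key : ∀ i j, i < j → j < q - 1 → γ ^ i = γ ^ j → False := by
      intro i j hij hj he
      have hc : γ ^ i * γ ^ (j - i) = γ ^ i * 1 := by
        rw [← pow_add, mul_one, show i + (j - i) = j by omega, ← he]
      have h1 : γ ^ (j - i) = 1 := mul_left_cancel₀ (pow_ne_zero _ hγ0) hc
      have := Nat.le_of_dvd (by omega) (hOeq ▸ orderOf_dvd_of_pow_eq_one h1)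
      omega
    intro i hi j hj hij
    rcases Nat.lt_trichotomy i j with h | h | h
    · exact absurd hij (fun hh => key i j h hj hh)
    · exact h
    · exact absurd hij (fun hh => key j i h hi hh.symm)
  · intro x hx
    obtain ⟨t, rfl⟩ := hpow x hx
    refine ⟨t % (q - 1), Nat.mod_lt _ (by omega), ?_⟩
    conv_lhs => rw [← Nat.div_add_mod t (q - 1)]
    rw [pow_add, pow_mul, h2, one_pow, one_mul]

end CardSAux

/-- Corollary of the main lemma: with notation as above,
`card (S n (α∙β)) = Σ_{j=0}^{q-2} card (S j α) * card (S (n-j) β)`. -/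
theorem card_S_concat
    (V : Type*) [CommRing V] [IsDomain V] [IsDiscreteValuationRing V]
    (q : ℕ) (hq : 2 ≤ q)
    (π : V) (hπ : Irreducible π)
    (hmax : IsLocalRing.maximalIdeal V = Ideal.span {π})
    (u : ℕ → V) (hu0 : u 0 = 0)
    (hurep : ∀ a : V, ∃! i : ℕ, i < q ∧ a - u i ∈ IsLocalRing.maximalIdeal V)
    (hudig : ∀ n : ℕ, u n = ∑ i ∈ Finset.range (Nat.digits q n).length,
        u ((Nat.digits q n).getD i 0) * π ^ i)
    (F : ℕ → V → V) (hF0 : ∀ x : V, F 0 x = 1)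
    (hF : ∀ (n : ℕ) (x : V),
        (∏ k ∈ Finset.range n, (u n - u k)) * F n x = ∏ k ∈ Finset.range n, (x - u k))
    (g : V) (hg : g ∉ IsLocalRing.maximalIdeal V)
    (hgen : ∀ a : V, a ∉ IsLocalRing.maximalIdeal V →
        ∃ j : ℕ, IsLocalRing.residue V a = IsLocalRing.residue V g ^ j)
    (S : ℤ → List ℕ → Set ℤ)
    (hS : ∀ (j : ℤ) (α : List ℕ), S j α =
        {m : ℤ | 0 ≤ m ∧ m ≤ (Nat.ofDigits q α : ℤ) ∧
          IsLocalRing.residue V (F m.toNat (u ((Nat.ofDigits q α : ℕ)))) =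
            IsLocalRing.residue V g ^ j})
    (α β : List ℕ) (hα : ∀ d ∈ α, d < q) (hβ : ∀ d ∈ β, d < q)
    (hαne : α ≠ []) (hβne : β ≠ []) (n : ℤ) :
    Nat.card (S n (α ++ β)) =
      ∑ j ∈ Finset.range (q - 1), Nat.card (S (j : ℤ) α) * Nat.card (S (n - (j : ℤ)) β) := by
  classical
  obtain ⟨hγ0, hγq, hγinj, hγsurj⟩ := csc_gamma hq hurep hg hgen
  set L := α.length with hLdef
  set a := Nat.ofDigits q α with haD
  set b := Nat.ofDigits q β with hbD
  have hZeq : (Nat.ofDigits q (α ++ β) : ℕ) = a + q ^ L * b := by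
    rw [Nat.ofDigits_append]
  have ha : a < q ^ L := Nat.ofDigits_lt_base_pow_length (by omega) hα
  have hLpos : 1 ≤ L := List.length_pos_iff.mpr hαne
  have hqL : 0 < q ^ L := pow_pos (by omega) _
  set Z := a + q ^ L * b with hZdef
  set T : ℤ → ℕ → Finset ℕ := fun j c => (Finset.range (c + 1)).filter
    (fun m => IsLocalRing.residue V (F m (u c)) = IsLocalRing.residue V g ^ j) with hT
  have hmemT : ∀ (j : ℤ) (c m : ℕ), m ∈ T j c ↔
      m ≤ c ∧ IsLocalRing.residue V (F m (u c)) = IsLocalRing.residue V g ^ j := by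
    intro j c m
    rw [hT]
    simp only [Finset.mem_filter, Finset.mem_range, Nat.lt_succ_iff]
  have hsets : ∀ (j : ℤ) (δ : List ℕ),
      S j δ = (((T j (Nat.ofDigits q δ)).image (fun m : ℕ => (m : ℤ)) : Finset ℤ) :
        Set ℤ) := by
    intro j δ
    rw [hS]
    ext m
    simp only [Finset.coe_image, Set.mem_image, Finset.mem_coe, Set.mem_setOf_eq,
      ← Nat.coe_ofDigits ℤ]
    constructor
    · rintro ⟨h0, h1, h2⟩
      refine ⟨m.toNat, ?_, ?_⟩
      · rw [hmemT]
        exact ⟨by omega, h2⟩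
      · omega
    · rintro ⟨m', hm', rfl⟩
      rw [hmemT] at hm'
      refine ⟨by positivity, by exact_mod_cast hm'.1, ?_⟩
      rw [Int.toNat_natCast]
      exact hm'.2
  have hcards : ∀ (j : ℤ) (δ : List ℕ),
      Nat.card (S j δ) = (T j (Nat.ofDigits q δ)).card := by
    intro j δ
    rw [hsets, Nat.card_coe_set_eq, Set.ncard_coe_finset,
      Finset.card_image_of_injOn (fun x _ y _ h => by exact_mod_cast h)]
  have hkey : T n Z = (Finset.range (q - 1)).biUnion (fun j =>
      ((T (j : ℤ) a) ×ˢ (T (n - (j : ℤ)) b)).image (fun p => p.1 + q ^ L * p.2)) := by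
    ext m
    simp only [Finset.mem_biUnion, Finset.mem_image, Finset.mem_product, Finset.mem_range]
    rw [hmemT]
    constructor
    · rintro ⟨hmZ, hres⟩
      set m0 := m % q ^ L with hm0
      set m1 := m / q ^ L with hm1
      have hm0a : m0 ≤ a := by
        by_contra hgt
        push_neg at hgt
        have hB := csc_mainB hq hπ hmax hu0 hurep hudig hF hLpos ha hgt hmZ
        rw [hres] at hB
        exact zpow_ne_zero n hγ0 hB
      have hm1b : m1 ≤ b := by
        have h1 : Z / q ^ L = b := by
          rw [hZdef, Nat.add_mul_div_left _ _ hqL, Nat.div_eq_of_lt ha, zero_add]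
        calc m1 ≤ Z / q ^ L := Nat.div_le_div_right hmZ
        _ = b := h1
      have hmsum : m0 + q ^ L * m1 = m := Nat.mod_add_div m (q ^ L)
      have hA := csc_mainA hq hπ hmax hu0 hurep hudig hF (b := b) (m1 := m1) ha hm0a
      rw [hmsum] at hA
      have hprod : IsLocalRing.residue V (F m0 (u a))
          * IsLocalRing.residue V (F m1 (u b)) = IsLocalRing.residue V g ^ n := by
        rw [← hA]
        exact hres
      have hF0ne : IsLocalRing.residue V (F m0 (u a)) ≠ 0 := by
        intro h0
        rw [h0, zero_mul] at hprod
        exact zpow_ne_zero n hγ0 hprod.symm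
      obtain ⟨j, hjlt, hjeq⟩ := hγsurj _ hF0ne
      refine ⟨j, hjlt, (m0, m1), ⟨?_, ?_⟩, hmsum⟩
      · rw [hmemT]
        exact ⟨hm0a, by rw [hjeq, zpow_natCast]⟩
      · rw [hmemT]
        refine ⟨hm1b, ?_⟩
        have hcalc : IsLocalRing.residue V g ^ (j : ℤ)
            * IsLocalRing.residue V (F m1 (u b))
            = IsLocalRing.residue V g ^ (j : ℤ)
              * IsLocalRing.residue V g ^ (n - (j : ℤ)) := by
          rw [← zpow_add₀ hγ0]
          have he : (j : ℤ) + (n - (j : ℤ)) = n := by ring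
          rw [he, ← hprod, hjeq, zpow_natCast]
        exact mul_left_cancel₀ (zpow_ne_zero _ hγ0) hcalc
    · rintro ⟨j, hjlt, ⟨m0, m1⟩, ⟨hp0, hp1⟩, rfl⟩
      rw [hmemT] at hp0 hp1
      obtain ⟨hm0a, hres0⟩ := hp0
      obtain ⟨hm1b, hres1⟩ := hp1
      constructor
      · rw [hZdef]
        exact add_le_add hm0a (Nat.mul_le_mul_left _ hm1b)
      · have hA := csc_mainA hq hπ hmax hu0 hurep hudig hF (b := b) (m1 := m1) ha hm0a
        rw [hA, hres0, hres1, ← zpow_add₀ hγ0]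
        congr 1
        ring
  have hdisj : ∀ j ∈ Finset.range (q - 1), ∀ j' ∈ Finset.range (q - 1), j ≠ j' →
      Disjoint (((T (j : ℤ) a) ×ˢ (T (n - (j : ℤ)) b)).image (fun p => p.1 + q ^ L * p.2))
        (((T (j' : ℤ) a) ×ˢ (T (n - (j' : ℤ)) b)).image (fun p => p.1 + q ^ L * p.2)) := by
    intro j hj j' hj' hne
    rw [Finset.disjoint_left]
    intro m hm hm'
    obtain ⟨p, hp, hpe⟩ := Finset.mem_image.mp hm
    obtain ⟨p', hp', hpe'⟩ := Finset.mem_image.mp hm'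
    replace hpe : p.1 + q ^ L * p.2 = m := hpe
    replace hpe' : p'.1 + q ^ L * p'.2 = m := hpe'
    rw [Finset.mem_product] at hp hp'
    simp only [hmemT] at hp hp'
    obtain ⟨⟨hp1, hp2⟩, -⟩ := hp
    obtain ⟨⟨hp1', hp2'⟩, -⟩ := hp'
    have e0 : p.1 = m % q ^ L := by
      rw [← hpe, Nat.add_mul_mod_self_left, Nat.mod_eq_of_lt (by omega)]
    have e0' : p'.1 = m % q ^ L := by
      rw [← hpe', Nat.add_mul_mod_self_left, Nat.mod_eq_of_lt (by omega)]
    have hsame : IsLocalRing.residue V g ^ (j : ℤ) = IsLocalRing.residue V g ^ (j' : ℤ) := by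
      rw [← hp2, ← hp2', e0, e0']
    rw [zpow_natCast, zpow_natCast] at hsame
    exact hne (hγinj j (Finset.mem_range.mp hj) j' (Finset.mem_range.mp hj') hsame)
  have hLHS : Nat.card (S n (α ++ β)) = (T n Z).card := by
    rw [hcards, hZeq]
  rw [hLHS, hkey, Finset.card_biUnion hdisj]
  apply Finset.sum_congr rfl
  intro j hj
  rw [hcards, hcards, ← haD, ← hbD]
  rw [Finset.card_image_of_injOn, Finset.card_product]
  intro p hp p' hp' he
  replace he : p.1 + q ^ L * p.2 = p'.1 + q ^ L * p'.2 := he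
  simp only [Finset.mem_coe, Finset.mem_product] at hp hp'
  simp only [hmemT] at hp hp'
  obtain ⟨⟨hp1, -⟩, -⟩ := hp
  obtain ⟨⟨hp1', -⟩, -⟩ := hp'
  have e1 : p.1 = p'.1 := by
    have h1 : (p.1 + q ^ L * p.2) % q ^ L = p.1 := by
      rw [Nat.add_mul_mod_self_left, Nat.mod_eq_of_lt (by omega)]
    have h2 : (p'.1 + q ^ L * p'.2) % q ^ L = p'.1 := by
      rw [Nat.add_mul_mod_self_left, Nat.mod_eq_of_lt (by omega)]
    rw [← h1, ← h2, he]
  have e2 : p.2 = p'.2 := by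
    have : q ^ L * p.2 = q ^ L * p'.2 := by omega
    exact Nat.eq_of_mul_eq_mul_left hqL this
  exact Prod.ext e1 e2
end
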